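/- arXiv:1206.2975 — 4 statements merged into one kernel-verified Lean document; each statement's English description precedes it below -/
import Mathlib

section
/- Let T be a tree on n ≥ 3 vertices, let w be a leaf of T, and let T' = T - w. Then F(T') < F(T) and F*(T') < F*(T). Moreover, for every vertex v of T', one has f_{T'}(v) < f_T(v), and f*_{T'}(v) ≤ f*_T(v) with equality if and only if T is a path and v is the endvertex of T other than w. -/
open SimpleGraph

/-- A subtree of a graph `G` is a nonempty set of vertices inducing a connected subgraph. -/
def IsSubtree {V : Type} (G : SimpleGraph V) (s : Finset V) : Prop :=
  s.Nonempty ∧ (G.induce (s : Set V)).Connected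

/-- `F(G)`: the number of subtrees of `G`. -/
noncomputable def numSubtrees {V : Type} (G : SimpleGraph V) : ℕ :=
  {s : Finset V | IsSubtree G s}.ncard

/-- A leaf is a vertex of degree 1. -/
def IsLeaf {V : Type} (G : SimpleGraph V) (v : V) : Prop :=
  (G.neighborSet v).ncard = 1

/-- `F*(G)`: the number of subtrees of `G` containing at least one leaf of `G`. -/
noncomputable def numLeafSubtrees {V : Type} (G : SimpleGraph V) : ℕ :=
  {s : Finset V | IsSubtree G s ∧ ∃ v ∈ s, IsLeaf G v}.ncard

/-- `f_G(v)`: the number of subtrees of `G` containing the vertex `v`. -/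
noncomputable def numSubtreesContaining {V : Type} (G : SimpleGraph V) (v : V) : ℕ :=
  {s : Finset V | IsSubtree G s ∧ v ∈ s}.ncard

/-- `f*_G(v)`: the number of subtrees of `G` containing `v` and at least one leaf of `G`
different from `v`. -/
noncomputable def numLeafSubtreesContaining {V : Type} (G : SimpleGraph V) (v : V) : ℕ :=
  {s : Finset V | IsSubtree G s ∧ v ∈ s ∧ ∃ w ∈ s, w ≠ v ∧ IsLeaf G w}.ncard

/-- A finite set of edges of `G` that are pairwise non-incident. -/
def IsMatchingSet {V : Type} (G : SimpleGraph V) (M : Finset (Sym2 V)) : Prop :=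
  (M : Set (Sym2 V)) ⊆ G.edgeSet ∧
    ∀ e ∈ M, ∀ f ∈ M, e ≠ f → ∀ v : V, ¬(v ∈ e ∧ v ∈ f)

/-- The matching number: the maximum size of a set of pairwise non-incident edges. -/
noncomputable def matchingNumber {V : Type} (G : SimpleGraph V) : ℕ :=
  sSup {k | ∃ M : Finset (Sym2 V), IsMatchingSet G M ∧ M.card = k}

/-- `G` has a perfect matching: pairwise non-incident edges covering every vertex. -/
def HasPerfectMatching {V : Type} (G : SimpleGraph V) : Prop :=
  ∃ M : Finset (Sym2 V), IsMatchingSet G M ∧ ∀ v : V, ∃ e ∈ M, v ∈ e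

/-- A dominating set: every vertex outside `S` has a neighbour in `S`. -/
def IsDominating {V : Type} (G : SimpleGraph V) (S : Set V) : Prop :=
  ∀ v : V, v ∉ S → ∃ u ∈ S, G.Adj u v

/-- The domination number: the minimum size of a dominating set. -/
noncomputable def dominationNumber {V : Type} (G : SimpleGraph V) : ℕ :=
  sInf {k | ∃ S : Finset V, IsDominating G (S : Set V) ∧ S.card = k}

/-- The tree `A(n,q)`: a center vertex adjacent to `n - 2q + 1` leaves and to the
midpoints of `q - 1` pendant paths of length 2. -/
def treeA (n q : ℕ) : SimpleGraph (Unit ⊕ Fin (n - 2 * q + 1) ⊕ Fin (q - 1) ⊕ Fin (q - 1)) :=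
  SimpleGraph.fromRel fun x y =>
    match x, y with
    | Sum.inl _, Sum.inr (Sum.inl _) => True
    | Sum.inl _, Sum.inr (Sum.inr (Sum.inl _)) => True
    | Sum.inr (Sum.inr (Sum.inl i)), Sum.inr (Sum.inr (Sum.inr j)) => i = j
    | _, _ => False

/-- The corona `G ∘ K₁`: attach one new pendant vertex to each vertex of `G`. -/
def corona {V : Type} (G : SimpleGraph V) : SimpleGraph (V ⊕ V) :=
  SimpleGraph.fromRel fun x y =>
    match x, y with
    | Sum.inl a, Sum.inl b => G.Adj a b
    | Sum.inl a, Sum.inr b => a = b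
    | _, _ => False

/-- `P₄(1^a, 1^b)`: a path on 4 vertices with `a` pendant vertices attached to one
endvertex and `b` pendant vertices attached to the other endvertex. -/
def treeP4 (a b : ℕ) : SimpleGraph (Fin 4 ⊕ Fin a ⊕ Fin b) :=
  SimpleGraph.fromRel fun x y =>
    match x, y with
    | Sum.inl i, Sum.inl j => (j : ℕ) = (i : ℕ) + 1
    | Sum.inl i, Sum.inr (Sum.inl _) => i = 0
    | Sum.inl i, Sum.inr (Sum.inr _) => i = 3
    | _, _ => False

/-- The broom `T_{n,Δ}`: a path on `n - Δ + 1` vertices with `Δ - 1` pendant vertices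
attached to one endvertex. -/
def broom (n Δ : ℕ) : SimpleGraph (Fin (n - Δ + 1) ⊕ Fin (Δ - 1)) :=
  SimpleGraph.fromRel fun x y =>
    match x, y with
    | Sum.inl i, Sum.inl j => (j : ℕ) = (i : ℕ) + 1
    | Sum.inl i, Sum.inr _ => (i : ℕ) = 0
    | _, _ => False

/-- `T'_{n,Δ}`: a path on `n - 2Δ + 3` vertices with `Δ - 2` pendant paths of length 2
and one pendant edge attached to one endvertex of the path. -/
def treeT' (n Δ : ℕ) :
    SimpleGraph (Fin (n - 2 * Δ + 3) ⊕ Fin (Δ - 2) ⊕ Fin (Δ - 2) ⊕ Unit) :=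
  SimpleGraph.fromRel fun x y =>
    match x, y with
    | Sum.inl i, Sum.inl j => (j : ℕ) = (i : ℕ) + 1
    | Sum.inl i, Sum.inr (Sum.inl _) => (i : ℕ) = 0
    | Sum.inr (Sum.inl i), Sum.inr (Sum.inr (Sum.inl j)) => i = j
    | Sum.inl i, Sum.inr (Sum.inr (Sum.inr _)) => (i : ℕ) = 0
    | _, _ => False

/-- The spider with `i` legs of length `l` and `j` legs of length `L`. -/
def spider (i l j L : ℕ) : SimpleGraph (Unit ⊕ (Fin i × Fin l) ⊕ (Fin j × Fin L)) :=
  SimpleGraph.fromRel fun x y =>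
    match x, y with
    | Sum.inl _, Sum.inr (Sum.inl (_, t)) => (t : ℕ) = 0
    | Sum.inl _, Sum.inr (Sum.inr (_, t)) => (t : ℕ) = 0
    | Sum.inr (Sum.inl (a, s)), Sum.inr (Sum.inl (b, t)) => a = b ∧ (t : ℕ) = (s : ℕ) + 1
    | Sum.inr (Sum.inr (a, s)), Sum.inr (Sum.inr (b, t)) => a = b ∧ (t : ℕ) = (s : ℕ) + 1
    | _, _ => False

/-- `Ť_{n,k}^d`: a path `v_1 v_2 … v_{d+1}` on `d + 1` vertices with `n - d - 1`
pendant vertices attached to the vertex `v_k` (`1 ≤ k ≤ d + 1`). -/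
def treeHat (n d k : ℕ) : SimpleGraph (Fin (d + 1) ⊕ Fin (n - d - 1)) :=
  SimpleGraph.fromRel fun x y =>
    match x, y with
    | Sum.inl i, Sum.inl j => (j : ℕ) = (i : ℕ) + 1
    | Sum.inl i, Sum.inr _ => (i : ℕ) + 1 = k
    | _, _ => False

/-- The tree obtained from the disjoint union of `T` and a rooted tree `X` by
identifying the root `u` of `X` with the vertex `x` of `T`. -/
def graft {A B : Type} (T : SimpleGraph A) (X : SimpleGraph B) (x : A) (u : B) :
    SimpleGraph (A ⊕ {b : B // b ≠ u}) :=
  SimpleGraph.fromRel fun p q =>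
    match p, q with
    | Sum.inl a, Sum.inl b => T.Adj a b
    | Sum.inr a, Sum.inr b => X.Adj (a : B) (b : B)
    | Sum.inl a, Sum.inr b => a = x ∧ X.Adj u (b : B)
    | Sum.inr _, Sum.inl _ => False

/-- The tree obtained from the disjoint union of `G` and `H` by adding the edge `uv`. -/
def joinByEdge {A B : Type} (G : SimpleGraph A) (H : SimpleGraph B) (u : A) (v : B) :
    SimpleGraph (A ⊕ B) :=
  SimpleGraph.fromRel fun p q =>
    match p, q with
    | Sum.inl a, Sum.inl b => G.Adj a b
    | Sum.inr a, Sum.inr b => H.Adj a b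
    | Sum.inl a, Sum.inr b => a = u ∧ b = v
    | Sum.inr _, Sum.inl _ => False

/-- The graph obtained from `G` by attaching one new pendant vertex to `x`. -/
def attachPendant {A : Type} (G : SimpleGraph A) (x : A) : SimpleGraph (A ⊕ Unit) :=
  SimpleGraph.fromRel fun p q =>
    match p, q with
    | Sum.inl a, Sum.inl b => G.Adj a b
    | Sum.inl a, Sum.inr _ => a = x
    | _, _ => False


/-!
Subtrees of `T - w` are exactly the subtrees of `T` avoiding `w`, which embeds the subtrees
counted by `F(T - w)` and `f_{T-w}(v)` into those counted by `F(T)` and `f_T(v)`, missing `{w}`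
and `T` respectively. A subtree of `T - w` that contains a leaf of `T - w` also contains a leaf of
`T`, unless that leaf is the neighbour of `w`, in which case adding `w` supplies one; since the
two cases are told apart by `w`, this is again injective and gives the statements for `F*` and
`f*`. The injection for `f*` misses `T` itself as soon as `T` has a leaf other than `v` and `w`.
If `v` and `w` are the only leaves, the handshake lemma bounds all degrees by 2, so the `v`–`w`
path is closed under adjacency and `T` is that path; then `T` itself is the only subtree on the
right, while `T - w` is a nontrivial tree and contributes at least itself on the left.
-/

theorem Set.ncard_lt_ncard_of_injOn {α β : Type*} {s : Set α} {t : Set β} (f : α → β)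
    (hf : Set.MapsTo f s t) (hinj : Set.InjOn f s) {b : β} (hb : b ∈ t)
    (hbs : ∀ a ∈ s, f a ≠ b) (ht : t.Finite) : s.ncard < t.ncard := by
  rw [← hinj.ncard_image]
  refine Set.ncard_lt_ncard ⟨hf.image_subset, fun h => ?_⟩ ht
  obtain ⟨a, ha, hab⟩ := h hb
  exact hbs a ha hab

theorem SimpleGraph.Reachable.mem_of_adj_closed {V : Type} {G : SimpleGraph V} {s : Set V}
    (hs : ∀ y z, y ∈ s → G.Adj y z → z ∈ s) {y z : V} (hyz : G.Reachable y z) (hy : y ∈ s) :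
    z ∈ s := by
  obtain ⟨q⟩ := hyz
  induction q with
  | nil => exact hy
  | cons hadj _ ih => exact ih (hs _ _ hy hadj)

section Subtrees

variable {V : Type} {G : SimpleGraph V}

def SimpleGraph.induceInduceIso (S : Set V) (s : Set S) :
    (G.induce S).induce s ≃g G.induce (Subtype.val '' s) where
  toFun x := ⟨x.1.1, x.1, x.2, rfl⟩
  invFun x := ⟨⟨x.1, by obtain ⟨y, -, hy⟩ := x.2; exact hy ▸ y.2⟩,
    by obtain ⟨y, hy, hyx⟩ := x.2; convert hy using 1; exact Subtype.ext hyx.symm⟩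
  left_inv _ := rfl
  right_inv _ := rfl
  map_rel_iff' := Iff.rfl

theorem isSubtree_induce_iff {S : Set V} (s : Finset S) :
    IsSubtree (G.induce S) s ↔ IsSubtree G (s.map (.subtype _)) := by
  rw [IsSubtree, IsSubtree, Finset.map_nonempty, Finset.coe_map, Function.Embedding.coe_subtype,
    (induceInduceIso S _).connected_iff]

theorem isSubtree_singleton (w : V) : IsSubtree G {w} := by
  refine ⟨Finset.singleton_nonempty w, ?_⟩
  rw [Finset.coe_singleton, induce_singleton_eq_top]
  exact connected_top

theorem isSubtree_univ [Fintype V] (hG : G.Connected) : IsSubtree G Finset.univ := by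
  refine ⟨Finset.univ_nonempty_iff.mpr hG.nonempty, ?_⟩
  rw [Finset.coe_univ]
  exact (induceUnivIso G).connected_iff.mpr hG

theorem IsSubtree.insert_of_adj [DecidableEq V] {t : Finset V} (ht : IsSubtree G t) {w x : V}
    (hx : x ∈ t) (hwx : G.Adj w x) : IsSubtree G (insert w t) := by
  refine ⟨Finset.insert_nonempty w t, ?_⟩
  rw [Finset.coe_insert, Set.insert_eq]
  refine connected_induce_union ?_ ht.2.preconnected rfl hx hwx
  rw [induce_singleton_eq_top]
  exact connected_top.preconnected

theorem IsSubtree.eq_univ_of_forall_isPath_mem_support [Fintype V] {t : Finset V}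
    (ht : IsSubtree G t) {a b : V} (ha : a ∈ t) (hb : b ∈ t)
    (hcover : ∀ p : G.Walk a b, p.IsPath → ∀ x, x ∈ p.support) :
    t = Finset.univ := by
  classical
  obtain ⟨q⟩ := ht.2.preconnected ⟨a, ha⟩ ⟨b, hb⟩
  have hp := q.toPath.2.map (f := (Embedding.induce (t : Set V)).toHom) Subtype.val_injective
  refine Finset.eq_univ_of_forall fun x => ?_
  obtain ⟨y, -, rfl⟩ := List.mem_map.mp (Walk.support_map _ _ ▸ hcover _ hp x)
  exact y.2

end Subtrees

section Leaves

variable {V : Type} {G : SimpleGraph V}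

theorem SimpleGraph.ncard_neighborSet_eq_degree (v : V) [Fintype (G.neighborSet v)] :
    (G.neighborSet v).ncard = G.degree v := by
  rw [← card_neighborFinset_eq_degree, neighborFinset, Set.ncard_eq_toFinset_card']

theorem isLeaf_iff_degree_eq_one {v : V} [Fintype (G.neighborSet v)] :
    IsLeaf G v ↔ G.degree v = 1 := by
  rw [IsLeaf, ncard_neighborSet_eq_degree]

theorem IsLeaf.iso {W : Type} {H : SimpleGraph W} (e : G ≃g H) {x : V} :
    IsLeaf H (e x) ↔ IsLeaf G x := by
  rw [IsLeaf, IsLeaf, ← Nat.card_coe_set_eq, ← Nat.card_coe_set_eq,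
    Nat.card_congr (e.mapNeighborSet x)]

theorem isLeaf_induce_iff {S : Set V} {x : S} (h : G.neighborSet x ⊆ S) :
    IsLeaf (G.induce S) x ↔ IsLeaf G x := by
  have : (G.induce S).neighborSet x = Subtype.val ⁻¹' G.neighborSet x := rfl
  rw [IsLeaf, IsLeaf, this,
    Set.ncard_preimage_of_injective_subset_range Subtype.val_injective (by simpa using h)]

theorem IsLeaf.adj_of_induce_compl {w : V} {x : {y : V | y ≠ w}}
    (hx : IsLeaf (G.induce {y | y ≠ w}) x) (hx' : ¬ IsLeaf G x) : G.Adj w x := by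
  by_contra hwx
  refine hx' ((isLeaf_induce_iff fun y hy => ?_).mp hx)
  rintro rfl
  exact hwx hy.symm

theorem SimpleGraph.IsTree.exists_isLeaf_ne [Finite V] [Nontrivial V] (hG : G.IsTree) :
    ∃ a b, a ≠ b ∧ IsLeaf G a ∧ IsLeaf G b := by
  classical
  have := Fintype.ofFinite V
  obtain ⟨a, b, hab, ha, hb⟩ := hG.exists_ne_and_degree_eq_one
  exact ⟨a, b, hab, isLeaf_iff_degree_eq_one.mpr ha, isLeaf_iff_degree_eq_one.mpr hb⟩

theorem isLeaf_pathGraph {n : ℕ} {i : Fin n} (hi : IsLeaf (pathGraph n) i) :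
    i.val = 0 ∨ i.val = n - 1 := by
  by_contra! ⟨h0, h1⟩
  have := i.isLt
  let prev : Fin n := ⟨i.val - 1, by omega⟩
  let next : Fin n := ⟨i.val + 1, by omega⟩
  have hlt : 1 < ((pathGraph n).neighborSet i).ncard := by
    refine (Set.one_lt_ncard_iff (Set.toFinite _)).mpr ⟨prev, next, ?_, ?_, ?_⟩ <;>
      simp only [prev, next, mem_neighborSet, pathGraph_adj, ne_eq, Fin.ext_iff, true_or] <;>
      omega
  exact hlt.ne' hi

theorem IsLeaf.eq_or_eq_of_iso_pathGraph {x : V} (hx : IsLeaf G x) {n : ℕ}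
    (e : G ≃g pathGraph n) {a b : V} (hab : a ≠ b) (ha : IsLeaf G a) (hb : IsLeaf G b) :
    x = a ∨ x = b := by
  have hab' : (e a).val ≠ (e b).val := fun h => hab (e.injective (Fin.ext h))
  have := isLeaf_pathGraph ((IsLeaf.iso e).mpr ha)
  have := isLeaf_pathGraph ((IsLeaf.iso e).mpr hb)
  have := isLeaf_pathGraph ((IsLeaf.iso e).mpr hx)
  rcases (by omega : (e x).val = (e a).val ∨ (e x).val = (e b).val) with h | h
  · exact .inl (e.injective (Fin.ext h))
  · exact .inr (e.injective (Fin.ext h))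

end Leaves

namespace SimpleGraph

variable {V : Type} [Fintype V] {G : SimpleGraph V} {a b : V}

theorem IsTree.ncard_neighborSet_le_two (hG : G.IsTree) (hab : a ≠ b) (ha : IsLeaf G a)
    (hb : IsLeaf G b) (hleaves : ∀ x, IsLeaf G x → x = a ∨ x = b) (x : V) :
    (G.neighborSet x).ncard ≤ 2 := by
  classical
  have : Nontrivial V := ⟨a, b, hab⟩
  -- handshake lemma: the excess degrees `deg y - 2` sum to `-2`, which the two leaves use up
  have hsum : ∑ y, ((G.degree y : ℤ) - 2) = -2 := by
    have := G.sum_degrees_eq_twice_card_edges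
    have := hG.card_edgeFinset
    rw [Finset.sum_sub_distrib, ← Nat.cast_sum, Finset.sum_const, Finset.card_univ]
    simp only [nsmul_eq_mul]
    omega
  have hrest : ∀ y ∈ Finset.univ \ {a, b}, (0 : ℤ) ≤ G.degree y - 2 := by
    intro y hy
    simp only [Finset.mem_sdiff, Finset.mem_insert, Finset.mem_singleton, not_or] at hy
    have := hG.connected.preconnected.degree_pos_of_nontrivial y
    have : G.degree y ≠ 1 := fun h => by
      rcases hleaves y (isLeaf_iff_degree_eq_one.mpr h) with rfl | rfl <;> simp_all
    omega
  rw [← Finset.sum_sdiff (Finset.subset_univ {a, b}), Finset.sum_pair hab,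
    isLeaf_iff_degree_eq_one.mp ha, isLeaf_iff_degree_eq_one.mp hb] at hsum
  have hzero := (Finset.sum_eq_zero_iff_of_nonneg hrest).mp (by omega)
  rw [ncard_neighborSet_eq_degree]
  by_cases hx : x = a ∨ x = b
  · rcases hx with rfl | rfl
    · exact (isLeaf_iff_degree_eq_one.mp ha).trans_le one_le_two
    · exact (isLeaf_iff_degree_eq_one.mp hb).trans_le one_le_two
  · have := hzero x (by simpa using hx)
    omega

theorem IsTree.mem_support_of_forall_isLeaf (hG : G.IsTree) (hab : a ≠ b) (ha : IsLeaf G a)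
    (hb : IsLeaf G b) (hleaves : ∀ x, IsLeaf G x → x = a ∨ x = b) {p : G.Walk a b}
    (hp : p.IsPath) (x : V) : x ∈ p.support := by
  have hnil : ¬ p.Nil := fun h => hab h.eq
  -- all degrees are at most 2, so every `G`-neighbour of a vertex of `p` is one along `p`
  have hclosed : ∀ y z, y ∈ {y | y ∈ p.support} → G.Adj y z → z ∈ {y | y ∈ p.support} := by
    intro y z hy hyz
    have hle : (G.neighborSet y).ncard ≤ (p.toSubgraph.neighborSet y).ncard := by
      obtain ⟨i, rfl, hi⟩ := Walk.mem_support_iff_exists_getVert.mp hy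
      rcases (by omega : i = 0 ∨ i = p.length ∨ (i ≠ 0 ∧ i < p.length)) with
        rfl | rfl | ⟨h0, hlt⟩
      · rw [Walk.getVert_zero, hp.neighborSet_toSubgraph_startpoint hnil, Set.ncard_singleton, ha]
      · rw [Walk.getVert_length, hp.neighborSet_toSubgraph_endpoint hnil, Set.ncard_singleton, hb]
      · rw [hp.ncard_neighborSet_toSubgraph_internal_eq_two h0 hlt]
        exact hG.ncard_neighborSet_le_two hab ha hb hleaves _
    have hnbr := Set.eq_of_subset_of_ncard_le (p.toSubgraph.neighborSet_subset y) hle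
    have hadj : p.toSubgraph.Adj y z := by rw [← Subgraph.mem_neighborSet, hnbr]; exact hyz
    exact p.mem_verts_toSubgraph.mp hadj.snd_mem
  exact (hG.connected.preconnected a x).mem_of_adj_closed hclosed p.start_mem_support

theorem IsTree.nonempty_iso_pathGraph (hG : G.IsTree) (hab : a ≠ b) (ha : IsLeaf G a)
    (hb : IsLeaf G b) (hleaves : ∀ x, IsLeaf G x → x = a ∨ x = b) :
    Nonempty (G ≃g pathGraph (Fintype.card V)) := by
  classical
  obtain ⟨p, hp⟩ := hG.connected.exists_isPath a b
  have hcover := hG.mem_support_of_forall_isLeaf hab ha hb hleaves hp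
  have hcard : Fintype.card V = p.length + 1 := by
    rw [← p.length_support, ← List.toFinset_card_of_nodup hp.support_nodup, ← Finset.card_univ]
    congr
    exact (Finset.eq_univ_of_forall fun x => List.mem_toFinset.mpr (hcover x)).symm
  have hedges : G.edgeFinset ⊆ p.edges.toFinset := by
    refine (Finset.eq_of_subset_of_card_le (fun e he => ?_) ?_).symm.subset
    · exact mem_edgeFinset.mpr (p.edges_subset_edgeSet (List.mem_toFinset.mp he))
    · rw [List.toFinset_card_of_nodup hp.isTrail.edges_nodup, p.length_edges]
      have := hG.card_edgeFinset
      omega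
  have htop : p.toSubgraph = ⊤ := by
    ext x y
    · simpa using hcover x
    · refine ⟨fun h => p.toSubgraph.adj_sub h, fun h => ?_⟩
      rw [Walk.adj_toSubgraph_iff_mem_edges, ← List.mem_toFinset]
      exact hedges (mem_edgeFinset.mpr h)
  have e := hp.pathGraphIsoToSubgraph
  rw [htop] at e
  rw [hcard]
  exact ⟨(e.trans Subgraph.topIso).symm⟩

theorem IsTree.isLeaf_of_forall_isLeaf (hG : G.IsTree) (hab : a ≠ b) (hb : IsLeaf G b)
    (hleaves : ∀ x, IsLeaf G x → x = a ∨ x = b) : IsLeaf G a := by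
  have : Nontrivial V := ⟨a, b, hab⟩
  obtain ⟨x, y, hxy, hx, hy⟩ := hG.exists_isLeaf_ne
  rcases hleaves x hx with rfl | rfl
  · exact hx
  · rcases hleaves y hy with rfl | rfl
    exacts [hy, absurd rfl hxy]

theorem IsTree.forall_isLeaf_iff_nonempty_iso_pathGraph (hG : G.IsTree) (hab : a ≠ b)
    (hb : IsLeaf G b) :
    (∀ x, IsLeaf G x → x = a ∨ x = b) ↔
      Nonempty (G ≃g pathGraph (Fintype.card V)) ∧ IsLeaf G a := by
  refine ⟨fun hleaves => ?_, fun ⟨⟨e⟩, ha⟩ x hx => hx.eq_or_eq_of_iso_pathGraph e hab ha hb⟩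
  have ha := hG.isLeaf_of_forall_isLeaf hab hb hleaves
  exact ⟨hG.nonempty_iso_pathGraph hab ha hb hleaves, ha⟩

end SimpleGraph

section DeleteVertex

variable {V : Type} {G : SimpleGraph V} {w : V}

theorem notMem_map_subtype (s : Finset {x : V | x ≠ w}) : w ∉ s.map (.subtype _) :=
  fun h => Finset.property_of_mem_map_subtype s h rfl

open Classical in
noncomputable def liftSubtree (w : V) (P : V → Prop) (s : Finset {x : V | x ≠ w}) : Finset V :=
  if ∃ x ∈ s.map (.subtype _), P x then s.map (.subtype _) else insert w (s.map (.subtype _))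

theorem subset_liftSubtree (P : V → Prop) (s : Finset {x : V | x ≠ w}) :
    s.map (.subtype _) ⊆ liftSubtree w P s := by
  classical
  unfold liftSubtree
  split_ifs
  exacts [subset_rfl, Finset.subset_insert _ _]

theorem liftSubtree_injective (P : V → Prop) : Function.Injective (liftSubtree w P) := by
  classical
  intro s t hst
  apply Finset.map_injective (Function.Embedding.subtype _)
  unfold liftSubtree at hst
  split_ifs at hst
  · exact hst
  · exact absurd (hst ▸ Finset.mem_insert_self w _) (notMem_map_subtype s)
  · exact absurd (hst ▸ Finset.mem_insert_self w _) (notMem_map_subtype t)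
  · rw [← Finset.erase_insert (notMem_map_subtype s), hst,
      Finset.erase_insert (notMem_map_subtype t)]

theorem not_of_mem_liftSubtree {P : V → Prop} {s : Finset {x : V | x ≠ w}}
    (hw : w ∈ liftSubtree w P s) {x : V} (hx : x ∈ liftSubtree w P s) (hxw : x ≠ w) : ¬ P x := by
  classical
  unfold liftSubtree at hw hx
  split_ifs at hw hx with h
  · exact absurd hw (notMem_map_subtype s)
  · exact fun hPx => h ⟨x, (Finset.mem_insert.mp hx).resolve_left hxw, hPx⟩

theorem isSubtree_liftSubtree {P : V → Prop} (hPw : P w) {s : Finset {x : V | x ≠ w}}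
    (hs : IsSubtree (G.induce {x | x ≠ w}) s) {x : {x : V | x ≠ w}} (hx : x ∈ s)
    (hleaf : IsLeaf (G.induce {x | x ≠ w}) x) (hxP : IsLeaf G x → P x) :
    IsSubtree G (liftSubtree w P s) ∧ ∃ y ∈ liftSubtree w P s, P y := by
  classical
  rw [isSubtree_induce_iff] at hs
  unfold liftSubtree
  split_ifs with h
  · exact ⟨hs, h⟩
  · have hxs : (x : V) ∈ s.map (.subtype _) := Finset.mem_map_of_mem _ hx
    have hwx : G.Adj w x := hleaf.adj_of_induce_compl fun hx' => h ⟨x, hxs, hxP hx'⟩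
    exact ⟨hs.insert_of_adj hxs hwx, w, Finset.mem_insert_self w _, hPw⟩

end DeleteVertex

section Counting

variable {V : Type} {G : SimpleGraph V} {w : V}

theorem numSubtrees_induce_lt [Finite V] (G : SimpleGraph V) (w : V) :
    numSubtrees (G.induce {x | x ≠ w}) < numSubtrees G :=
  Set.ncard_lt_ncard_of_injOn _ (fun s hs => (isSubtree_induce_iff s).mp hs)
    (Finset.map_injective _).injOn (isSubtree_singleton w)
    (fun s _ h => notMem_map_subtype s (h ▸ Finset.mem_singleton_self w)) (Set.toFinite _)

theorem numSubtreesContaining_induce_lt [Fintype V] (hG : G.Connected) (v : {x : V | x ≠ w}) :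
    numSubtreesContaining (G.induce {x | x ≠ w}) v < numSubtreesContaining G v :=
  Set.ncard_lt_ncard_of_injOn _
    (fun s hs => ⟨(isSubtree_induce_iff s).mp hs.1, Finset.mem_map_of_mem _ hs.2⟩)
    (Finset.map_injective _).injOn ⟨isSubtree_univ hG, Finset.mem_univ _⟩
    (fun s _ h => notMem_map_subtype s (h ▸ Finset.mem_univ w)) (Set.toFinite _)

theorem numLeafSubtrees_induce_lt [Finite V] (hw : IsLeaf G w) :
    numLeafSubtrees (G.induce {x | x ≠ w}) < numLeafSubtrees G := by
  refine Set.ncard_lt_ncard_of_injOn (liftSubtree w (IsLeaf G))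
    (fun s ⟨hs, x, hx, hleaf⟩ => isSubtree_liftSubtree hw hs hx hleaf id)
    (liftSubtree_injective _).injOn ⟨isSubtree_singleton w, w, Finset.mem_singleton_self w, hw⟩
    (fun s ⟨hs, _⟩ h => ?_) (Set.toFinite _)
  obtain ⟨x, hx⟩ := hs.1
  have := h ▸ subset_liftSubtree _ s (Finset.mem_map_of_mem _ hx)
  exact x.2 (Finset.mem_singleton.mp this)

theorem mapsTo_liftSubtree (hw : IsLeaf G w) (v : {x : V | x ≠ w}) :
    Set.MapsTo (liftSubtree w fun y => y ≠ v ∧ IsLeaf G y)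
      {s | IsSubtree (G.induce {x | x ≠ w}) s ∧ v ∈ s ∧
        ∃ x ∈ s, x ≠ v ∧ IsLeaf (G.induce {x | x ≠ w}) x}
      {t | IsSubtree G t ∧ (v : V) ∈ t ∧ ∃ x ∈ t, x ≠ v ∧ IsLeaf G x} := by
  rintro s ⟨hs, hv, x, hx, hxv, hleaf⟩
  obtain ⟨ht, y, hy, hPy⟩ := isSubtree_liftSubtree (P := fun y : V => y ≠ v ∧ IsLeaf G y)
    ⟨Ne.symm v.2, hw⟩ hs hx hleaf fun h => ⟨Subtype.coe_ne_coe.mpr hxv, h⟩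
  exact ⟨ht, subset_liftSubtree _ s (Finset.mem_map_of_mem _ hv), y, hy, hPy⟩

theorem numLeafSubtreesContaining_induce_le [Finite V] (hw : IsLeaf G w) (v : {x : V | x ≠ w}) :
    numLeafSubtreesContaining (G.induce {x | x ≠ w}) v ≤ numLeafSubtreesContaining G v :=
  Set.ncard_le_ncard_of_injOn _ (mapsTo_liftSubtree hw v) (liftSubtree_injective _).injOn
    (Set.toFinite _)

theorem numLeafSubtreesContaining_induce_lt [Fintype V] (hG : G.Connected) (hw : IsLeaf G w)
    (v : {x : V | x ≠ w}) {x : V} (hx : IsLeaf G x) (hxv : x ≠ v) (hxw : x ≠ w) :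
    numLeafSubtreesContaining (G.induce {x | x ≠ w}) v < numLeafSubtreesContaining G v :=
  Set.ncard_lt_ncard_of_injOn _ (mapsTo_liftSubtree hw v) (liftSubtree_injective _).injOn
    ⟨isSubtree_univ hG, Finset.mem_univ _, w, Finset.mem_univ _, Ne.symm v.2, hw⟩
    (fun _ _ h => not_of_mem_liftSubtree (h ▸ Finset.mem_univ w) (h ▸ Finset.mem_univ x) hxw
      ⟨hxv, hx⟩)
    (Set.toFinite _)

theorem SimpleGraph.IsTree.one_le_numLeafSubtreesContaining [Fintype V] [Nontrivial V]
    (hG : G.IsTree) (v : V) : 1 ≤ numLeafSubtreesContaining G v := by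
  obtain ⟨x, y, hxy, hx, hy⟩ := hG.exists_isLeaf_ne
  refine (Set.ncard_pos (Set.toFinite _)).mpr
    ⟨Finset.univ, isSubtree_univ hG.connected, Finset.mem_univ v, ?_⟩
  by_cases hxv : x = v
  · exact ⟨y, Finset.mem_univ y, hxv ▸ hxy.symm, hy⟩
  · exact ⟨x, Finset.mem_univ x, hxv, hx⟩

theorem SimpleGraph.IsTree.numLeafSubtreesContaining_le_one [Fintype V] (hG : G.IsTree)
    {v : V} (hvw : v ≠ w) (hw : IsLeaf G w) (hleaves : ∀ x, IsLeaf G x → x = v ∨ x = w) :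
    numLeafSubtreesContaining G v ≤ 1 := by
  have hv := hG.isLeaf_of_forall_isLeaf hvw hw hleaves
  refine (Set.ncard_le_ncard (t := {Finset.univ}) ?_).trans (Set.ncard_singleton _).le
  rintro t ⟨ht, hvt, x, hxt, hxv, hx⟩
  obtain rfl := (hleaves x hx).resolve_left hxv
  exact ht.eq_univ_of_forall_isPath_mem_support hvt hxt
    fun p hp => hG.mem_support_of_forall_isLeaf hvw hv hw hleaves hp

theorem numLeafSubtreesContaining_induce_eq_iff [Fintype V] (hG : G.IsTree) (hw : IsLeaf G w)
    (hn : 3 ≤ Fintype.card V) (v : {x : V | x ≠ w}) :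
    numLeafSubtreesContaining (G.induce {x | x ≠ w}) v = numLeafSubtreesContaining G v ↔
      ∀ x, IsLeaf G x → x = v ∨ x = w := by
  classical
  refine ⟨fun heq => ?_, fun hleaves => ?_⟩
  · by_contra! ⟨x, hx, hxv, hxw⟩
    exact heq.not_lt (numLeafSubtreesContaining_induce_lt hG.connected hw v hx hxv hxw)
  · have hG' : (G.induce {x | x ≠ w}).IsTree :=
      ⟨hG.connected.induce_compl_singleton_of_degree_eq_one (isLeaf_iff_degree_eq_one.mp hw),
        hG.isAcyclic.induce _⟩
    have : Nontrivial {x : V | x ≠ w} := by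
      rw [← Fintype.one_lt_card_iff_nontrivial, Set.card_ne_eq]
      omega
    refine (numLeafSubtreesContaining_induce_le hw v).antisymm ?_
    exact (hG.numLeafSubtreesContaining_le_one v.2 hw hleaves).trans
      (hG'.one_le_numLeafSubtreesContaining v)

end Counting

/-- Deleting a leaf `w` from a tree `T` on `n ≥ 3` vertices strictly
decreases `F` and `F*`; moreover for every vertex `v` of `T - w` one has
`f_{T-w}(v) < f_T(v)` and `f*_{T-w}(v) ≤ f*_T(v)`, with equality in the latter iff `T`
is a path and `v` is the leaf of `T` other than `w`. -/
theorem deleting_leaf {V : Type} [Fintype V] (n : ℕ) (hn : 3 ≤ n)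
    (G : SimpleGraph V) (hG : G.IsTree) (hcard : Fintype.card V = n)
    (w : V) (hw : IsLeaf G w) :
    numSubtrees (G.induce {x : V | x ≠ w}) < numSubtrees G ∧
      numLeafSubtrees (G.induce {x : V | x ≠ w}) < numLeafSubtrees G ∧
      (∀ v : {x : V | x ≠ w},
        numSubtreesContaining (G.induce {x : V | x ≠ w}) v <
          numSubtreesContaining G (v : V)) ∧
      (∀ v : {x : V | x ≠ w},
        numLeafSubtreesContaining (G.induce {x : V | x ≠ w}) v ≤
            numLeafSubtreesContaining G (v : V) ∧
          (numLeafSubtreesContaining (G.induce {x : V | x ≠ w}) v =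
              numLeafSubtreesContaining G (v : V) ↔
            Nonempty (G ≃g SimpleGraph.pathGraph n) ∧ IsLeaf G (v : V))) := by
  subst hcard
  refine ⟨numSubtrees_induce_lt G w, numLeafSubtrees_induce_lt hw,
    fun v => numSubtreesContaining_induce_lt hG.connected v,
    fun v => ⟨numLeafSubtreesContaining_induce_le hw v, ?_⟩⟩
  rw [numLeafSubtreesContaining_induce_eq_iff hG hw hn v]
  exact hG.forall_isLeaf_iff_nonempty_iso_pathGraph v.2 hw
end

section
/- Let T be a tree with an edge uv such that u has degree 1 in T. Then f*_T(u) ≤ f*_T(v), with equality if and only if T is isomorphic to K_2 (the tree on two vertices). -/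
open SimpleGraph

private lemma leaf_nbr {V : Type} {G : SimpleGraph V} {u x : V}
    (hu : IsLeaf G u) (hx : G.Adj u x) : G.neighborSet u = {x} := by
  obtain ⟨a, ha⟩ := Set.ncard_eq_one.mp hu
  have hx' : x ∈ G.neighborSet u := hx
  rw [ha] at hx' ⊢
  rw [Set.mem_singleton_iff] at hx'
  rw [hx']

private lemma walk_avoid {V : Type} {G : SimpleGraph V} {u : V} (hu : IsLeaf G u) :
    ∀ n : ℕ, ∀ x y : V, ∀ p : G.Walk x y, p.length ≤ n →
      ∀ (hx : x ≠ u) (hy : y ≠ u),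
      (G.induce {z : V | z ≠ u}).Reachable ⟨x, hx⟩ ⟨y, hy⟩ := by
  intro n
  induction n with
  | zero =>
    intro x y p hp hx hy
    cases p with
    | nil => exact Reachable.refl _
    | cons h q => simp [Walk.length_cons] at hp
  | succ n ih =>
    intro x y p hp hx hy
    cases p with
    | nil => exact Reachable.refl _
    | @cons _ z _ h q =>
      by_cases hz : z = u
      · subst hz
        cases q with
        | nil => exact absurd rfl hy
        | @cons _ z' _ h' q' =>
          have hz' : z' = x := by
            have hmem : z' ∈ ({x} : Set _) := by
              rw [← leaf_nbr hu h.symm]; exact h'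
            exact hmem
          subst hz'
          refine ih _ y q' ?_ hx hy
          simp [Walk.length_cons] at hp
          omega
      · have h1 : (G.induce {z : V | z ≠ u}).Adj ⟨x, hx⟩ ⟨z, hz⟩ := h
        refine h1.reachable.trans (ih z y q ?_ hz hy)
        simp [Walk.length_cons] at hp
        omega

private lemma induce_compl_connected {V : Type} {G : SimpleGraph V} (hG : G.IsTree)
    {u v : V} (hu : IsLeaf G u) (hv : v ≠ u) :
    (G.induce {z : V | z ≠ u}).Connected := by
  rw [connected_iff]
  refine ⟨?_, ⟨⟨v, hv⟩⟩⟩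
  rintro ⟨x, hx⟩ ⟨y, hy⟩
  obtain ⟨p⟩ := hG.isConnected.preconnected x y
  exact walk_avoid hu p.length x y p le_rfl hx hy

private lemma isLeaf_iff_degree {V : Type} [Fintype V] (G : SimpleGraph V)
    [DecidableRel G.Adj] (w : V) : IsLeaf G w ↔ G.degree w = 1 := by
  unfold IsLeaf
  rw [Set.ncard_eq_toFinset_card', Set.toFinset_card, card_neighborSet_eq_degree]

private lemma exists_nbr {V : Type} [Fintype V] {G : SimpleGraph V}
    (hG : G.Connected) (h2 : 2 ≤ Fintype.card V) (w : V) : ∃ z, G.Adj w z := by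
  obtain ⟨x, hx⟩ := Fintype.exists_ne_of_one_lt_card (by omega) w
  obtain ⟨p⟩ := hG.preconnected w x
  cases p with
  | nil => exact absurd rfl hx.symm
  | cons h q => exact ⟨_, h⟩

private lemma adj_of_ne {W : Type} {H : SimpleGraph W} {a b : W} (p : H.Walk a b)
    (h : a ≠ b) : ∃ z, H.Adj a z := by
  cases p with
  | nil => exact absurd rfl h
  | cons h q => exact ⟨_, h⟩

private lemma v_not_leaf {V : Type} [Fintype V] {G : SimpleGraph V}
    (hG : G.IsTree) {u v : V} (huv : G.Adj u v) (hu : IsLeaf G u)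
    (h3 : 3 ≤ Fintype.card V) : ¬ IsLeaf G v := by
  classical
  intro hv
  have hne : v ≠ u := huv.ne'
  have : ∃ x, x ≠ u ∧ x ≠ v := by
    by_contra hcon
    push_neg at hcon
    have hsub : (Finset.univ : Finset V) ⊆ {u, v} := by
      intro x _
      rcases eq_or_ne x u with rfl | hxu
      · simp
      · simp [hcon x hxu]
    have h1 := Finset.card_le_card hsub
    rw [Finset.card_univ] at h1
    have h2 : ({u, v} : Finset V).card ≤ 2 :=
      (Finset.card_insert_le u {v}).trans (by simp)
    omega
  obtain ⟨x, hxu, hxv⟩ := this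
  obtain ⟨p⟩ := hG.isConnected.preconnected v x
  obtain ⟨q⟩ := walk_avoid hu p.length v x p le_rfl hne hxu
  obtain ⟨z, hz⟩ := adj_of_ne q (by simp [Subtype.ext_iff]; exact fun h => hxv h.symm)
  have hz' : (z : V) ∈ G.neighborSet v := hz
  rw [leaf_nbr hv huv.symm] at hz'
  exact z.2 hz'

private lemma exists_other_leaf {V : Type} [Fintype V] {G : SimpleGraph V}
    (hG : G.IsTree) {u v : V} (huv : G.Adj u v) (hu : IsLeaf G u)
    (h3 : 3 ≤ Fintype.card V) : ∃ w, w ≠ u ∧ w ≠ v ∧ IsLeaf G w := by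
  classical
  by_contra hcon
  push_neg at hcon
  have hsum : ∑ w, G.degree w = 2 * Finset.card G.edgeFinset :=
    G.sum_degrees_eq_twice_card_edges
  have hcard : Finset.card G.edgeFinset + 1 = Fintype.card V := hG.card_edgeFinset
  have hdu : G.degree u = 1 := (isLeaf_iff_degree G u).mp hu
  have hdv : 2 ≤ G.degree v := by
    have h1 : 0 < G.degree v := by
      rw [G.degree_pos_iff_exists_adj]
      exact ⟨u, huv.symm⟩
    have h2 : G.degree v ≠ 1 := fun h =>
      v_not_leaf hG huv hu h3 ((isLeaf_iff_degree G v).mpr h)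
    omega
  have hrest : ∀ w ∈ Finset.univ \ ({u, v} : Finset V), 2 ≤ G.degree w := by
    intro w hw
    simp only [Finset.mem_sdiff, Finset.mem_univ, Finset.mem_insert,
      Finset.mem_singleton, true_and] at hw
    push_neg at hw
    have h1 : 0 < G.degree w := by
      rw [G.degree_pos_iff_exists_adj]
      exact exists_nbr hG.isConnected (by omega) w
    have h2 : G.degree w ≠ 1 := fun h =>
      hcon w hw.1 hw.2 ((isLeaf_iff_degree G w).mpr h)
    omega
  have hsplit : ∑ w ∈ ({u, v} : Finset V), G.degree w
      + ∑ w ∈ Finset.univ \ ({u, v} : Finset V), G.degree w = ∑ w, G.degree w := by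
    rw [add_comm]
    exact Finset.sum_sdiff (Finset.subset_univ _)
  have hpair : ∑ w ∈ ({u, v} : Finset V), G.degree w = G.degree u + G.degree v :=
    Finset.sum_pair huv.ne
  have hlow : 2 * (Finset.univ \ ({u, v} : Finset V)).card
      ≤ ∑ w ∈ Finset.univ \ ({u, v} : Finset V), G.degree w := by
    calc 2 * (Finset.univ \ ({u, v} : Finset V)).card
        = (Finset.univ \ ({u, v} : Finset V)).card • 2 := by rw [smul_eq_mul]; ring
      _ ≤ _ := Finset.card_nsmul_le_sum _ _ _ hrest
  have hc : (Finset.univ \ ({u, v} : Finset V)).card = Fintype.card V - 2 := by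
    rw [Finset.card_sdiff_of_subset (Finset.subset_univ _), Finset.card_univ,
      Finset.card_pair huv.ne]
  omega

/-- If `uv` is an edge of a tree `T` with `u` of degree 1, then
`f*_T(u) ≤ f*_T(v)`, with equality iff `T ≅ K₂`. -/
theorem leafSubtreesContaining_pendant_le {V : Type} [Fintype V]
    (G : SimpleGraph V) (hG : G.IsTree) (u v : V) (huv : G.Adj u v)
    (hu : IsLeaf G u) :
    numLeafSubtreesContaining G u ≤ numLeafSubtreesContaining G v ∧
      (numLeafSubtreesContaining G u = numLeafSubtreesContaining G v ↔
        Nonempty (G ≃g (⊤ : SimpleGraph (Fin 2)))) := by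
  classical
  set Su := {s : Finset V | IsSubtree G s ∧ u ∈ s ∧ ∃ w ∈ s, w ≠ u ∧ IsLeaf G w} with hSu
  set Sv := {s : Finset V | IsSubtree G s ∧ v ∈ s ∧ ∃ w ∈ s, w ≠ v ∧ IsLeaf G w} with hSv
  have hru : numLeafSubtreesContaining G u = Su.ncard := rfl
  have hrv : numLeafSubtreesContaining G v = Sv.ncard := rfl
  have hsub : Su ⊆ Sv := by
    rintro s ⟨hs, hus, w, hws, hwu, hwleaf⟩
    have hvs : v ∈ s := by
      obtain ⟨p⟩ := hs.2.preconnected ⟨u, hus⟩ ⟨w, hws⟩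
      obtain ⟨z, hz⟩ := adj_of_ne p
        (by simp only [ne_eq, Subtype.ext_iff]; exact fun h => hwu h.symm)
      have hz' : (z : V) ∈ G.neighborSet u := hz
      rw [leaf_nbr hu huv] at hz'
      have := z.2
      rw [hz'] at this
      exact this
    exact ⟨hs, hvs, u, hus, huv.ne, hu⟩
  have hall2 : Fintype.card V = 2 → ∀ x : V, x = u ∨ x = v := by
    intro hcard x
    have huniv : ({u, v} : Finset V) = Finset.univ := by
      apply Finset.eq_univ_of_card
      rw [Finset.card_pair huv.ne, hcard]
    have hx := Finset.mem_univ x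
    rw [← huniv] at hx
    simpa using hx
  refine ⟨by rw [hru, hrv]; exact Set.ncard_le_ncard hsub (Set.toFinite _), ?_, ?_⟩
  · intro heq
    rw [hru, hrv] at heq
    have hSeq : Su = Sv := Set.eq_of_subset_of_ncard_le hsub heq.ge (Set.toFinite _)
    have h2 : 2 ≤ Fintype.card V := Fintype.one_lt_card_iff_nontrivial.mpr ⟨⟨u, v, huv.ne⟩⟩
    have hle2 : Fintype.card V ≤ 2 := by
      by_contra hgt
      have h3 : 3 ≤ Fintype.card V := by omega
      obtain ⟨w, hwu, hwv, hwleaf⟩ := exists_other_leaf hG huv hu h3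
      set s0 : Finset V := Finset.univ.erase u with hs0
      have hset : (↑s0 : Set V) = {z : V | z ≠ u} := by ext z; simp [hs0]
      have hconn : (G.induce (↑s0 : Set V)).Connected := by
        rw [hset]; exact induce_compl_connected hG hu huv.ne'
      have hmem : s0 ∈ Sv := by
        refine ⟨⟨⟨v, ?_⟩, hconn⟩, ?_, w, ?_, hwv, hwleaf⟩ <;>
          simp [hs0, huv.ne', hwu]
      rw [← hSeq] at hmem
      have : u ∉ s0 := by simp [hs0]
      exact this hmem.2.1
    have hcard : Fintype.card V = 2 := le_antisymm hle2 h2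
    have hall := hall2 hcard
    refine ⟨⟨⟨fun x => if x = u then 0 else 1, fun i => if i = 0 then u else v,
      ?_, ?_⟩, ?_⟩⟩
    · intro x
      rcases hall x with rfl | rfl
      · simp
      · simp [huv.ne']
    · intro i
      fin_cases i <;> simp [huv.ne']
    · intro a b
      simp only [Equiv.coe_fn_mk, top_adj]
      rcases hall a with rfl | rfl <;> rcases hall b with rfl | rfl <;>
        simp [huv, huv.symm, huv.ne, huv.ne']
  · rintro ⟨e⟩
    have hcard : Fintype.card V = 2 := by
      rw [Fintype.card_congr e.toEquiv]
      simp
    have hall := hall2 hcard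
    have hvleaf : IsLeaf G v := by
      have hset : G.neighborSet v = {u} := by
        ext z
        simp only [mem_neighborSet, Set.mem_singleton_iff]
        constructor
        · intro hz
          rcases hall z with rfl | rfl
          · rfl
          · exact absurd hz (G.irrefl)
        · rintro rfl
          exact huv.symm
      rw [IsLeaf, hset, Set.ncard_singleton]
    have hsub' : Sv ⊆ Su := by
      rintro s ⟨hs, hvs, w, hws, hwv, _⟩
      rcases hall w with rfl | rfl
      · exact ⟨hs, hws, v, hvs, huv.ne', hvleaf⟩
      · exact absurd rfl hwv
    rw [hru, hrv, hsub.antisymm hsub']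
end

section
/- Let T be a tree with distinct vertices x and y, and let X be a tree with at least two vertices and a distinguished root u. Let T' be the tree obtained from the disjoint union of T and X by identifying u with x, and let T'' be the tree obtained from the disjoint union of T and X by identifying u with y. If f_T(x) > f_T(y), then F(T') > F(T''). -/
open SimpleGraph

/-!
A subtree of the graft lies inside `T`, inside `X - u`, or meets both; in the last case it
contains the glued vertex `z` and is the union of a subtree of `T` through `z` and a subtree of
`X` through `u` other than `{u}`. Hence `F(graft T X z u) = F(T) + F(X - u) + f_T(z) (f_X(u) - 1)`,
and `f_X(u) > 1` because the root has a neighbour in `X`.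
-/

namespace SimpleGraph

variable {V W : Type*} {G : SimpleGraph V} {H : SimpleGraph W}

lemma Reachable.map_of_adj {f : V → W} (hf : ∀ ⦃a b⦄, G.Adj a b → H.Reachable (f a) (f b))
    {v w : V} (h : G.Reachable v w) : H.Reachable (f v) (f w) := by
  obtain ⟨p⟩ := h
  induction p with
  | nil => rfl
  | cons hadj _ ih => exact (hf hadj).trans ih

lemma Connected.induce_image {s : Set V} (hs : (G.induce s).Connected) (f : V → W)
    (hf : ∀ a ∈ s, ∀ b ∈ s, G.Adj a b → f a = f b ∨ H.Adj (f a) (f b)) :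
    (H.induce (f '' s)).Connected := by
  have : Nonempty (f '' s) := hs.nonempty.map fun a : s => ⟨f a, Set.mem_image_of_mem f a.2⟩
  refine ⟨?_⟩
  rintro ⟨_, a, ha, rfl⟩ ⟨_, b, hb, rfl⟩
  refine Reachable.map_of_adj (G := G.induce s)
    (f := fun c : s => (⟨f c, Set.mem_image_of_mem f c.2⟩ : f '' s)) ?_
    (hs.preconnected ⟨a, ha⟩ ⟨b, hb⟩)
  intro c d hcd
  rcases hf c c.2 d d.2 hcd with h | h
  · simp only [h, Reachable.rfl]
  · exact Adj.reachable h

end SimpleGraph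

lemma isSubtree_iff_connected {V : Type} {G : SimpleGraph V} {s : Finset V} :
    IsSubtree G s ↔ (G.induce (s : Set V)).Connected :=
  ⟨And.right, fun h => ⟨Finset.coe_nonempty.mp (Set.nonempty_coe_sort.mp h.nonempty), h⟩⟩

lemma Finset.coe_disjSum {α β : Type*} (s : Finset α) (t : Finset β) :
    (s.disjSum t : Set (α ⊕ β)) = Sum.inl '' s ∪ Sum.inr '' t := by
  ext (a | b) <;> simp

section Graft

variable {A B : Type} {T : SimpleGraph A} {X : SimpleGraph B} {z : A} {u : B}

local notation "B'" => {b : B // b ≠ u}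

@[simp] lemma graft_adj_inl_inl {a b : A} :
    (graft T X z u).Adj (.inl a) (.inl b) ↔ T.Adj a b := by
  simpa [graft, T.adj_comm b a] using fun h : T.Adj a b => h.ne

@[simp] lemma graft_adj_inr_inr {a b : B'} :
    (graft T X z u).Adj (.inr a) (.inr b) ↔ X.Adj a b := by
  simpa [graft, X.adj_comm b a] using fun h : X.Adj a b => Subtype.coe_ne_coe.mp h.ne

@[simp] lemma graft_adj_inl_inr {a : A} {b : B'} :
    (graft T X z u).Adj (.inl a) (.inr b) ↔ a = z ∧ X.Adj u b := by
  simp [graft]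

@[simp] lemma graft_adj_inr_inl {a : A} {b : B'} :
    (graft T X z u).Adj (.inr b) (.inl a) ↔ a = z ∧ X.Adj u b := by
  simp [graft]

variable (z u) in
noncomputable def graftRight (b : B) : A ⊕ B' :=
  open Classical in if h : b = u then .inl z else .inr ⟨b, h⟩

@[simp] lemma graftRight_root : graftRight z u u = .inl z := by
  simp [graftRight]

lemma graftRight_comp_val : graftRight z u ∘ Subtype.val = Sum.inr := by
  funext b
  simp [graftRight, b.2]

lemma graft_adj_graftRight {a b : B} (h : X.Adj a b) :
    (graft T X z u).Adj (graftRight z u a) (graftRight z u b) := by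
  unfold graftRight
  split_ifs with ha hb hb
  · exact absurd (ha ▸ hb ▸ h) X.irrefl
  · simpa using ha ▸ h
  · simpa using hb ▸ h.symm
  · simpa using h

lemma graft_adj_elim_left {p q : A ⊕ B'} (h : (graft T X z u).Adj p q) :
    Sum.elim id (fun _ => z) p = Sum.elim id (fun _ => z) q ∨
      T.Adj (Sum.elim id (fun _ => z) p) (Sum.elim id (fun _ => z) q) := by
  rcases p with a | b <;> rcases q with c | d <;> simp_all

lemma graft_adj_elim_right {p q : A ⊕ B'} (h : (graft T X z u).Adj p q) :
    Sum.elim (fun _ => u) Subtype.val p = Sum.elim (fun _ => u) Subtype.val q ∨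
      X.Adj (Sum.elim (fun _ => u) Subtype.val p) (Sum.elim (fun _ => u) Subtype.val q) := by
  rcases p with a | b <;> rcases q with c | d <;> simp_all [X.adj_comm _ u]

lemma isSubtree_graft_disjSum_empty {s : Finset A} :
    IsSubtree (graft T X z u) (s.disjSum ∅) ↔ IsSubtree T s := by
  rw [isSubtree_iff_connected, isSubtree_iff_connected, Finset.coe_disjSum, Finset.coe_empty,
    Set.image_empty, Set.union_empty]
  refine ⟨fun h => ?_, fun h => ?_⟩
  · have h' := h.induce_image _ fun _ _ _ _ => graft_adj_elim_left
    rwa [← Set.image_comp, Sum.elim_comp_inl, Set.image_id] at h'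
  · exact h.induce_image _ fun _ _ _ _ hab => .inr (graft_adj_inl_inl.mpr hab)

lemma isSubtree_graft_empty_disjSum {t : Finset B'} :
    IsSubtree (graft T X z u) ((∅ : Finset A).disjSum t) ↔
      (X.induce (Subtype.val '' (t : Set B'))).Connected := by
  rw [isSubtree_iff_connected, Finset.coe_disjSum, Finset.coe_empty, Set.image_empty,
    Set.empty_union]
  refine ⟨fun h => ?_, fun h => ?_⟩
  · have h' := h.induce_image _ fun _ _ _ _ => graft_adj_elim_right
    rwa [← Set.image_comp, Sum.elim_comp_inr] at h'
  · have h' := h.induce_image (graftRight z u) fun _ _ _ _ hab =>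
      .inr (graft_adj_graftRight (T := T) hab)
    rwa [← Set.image_comp, graftRight_comp_val] at h'

lemma mem_of_isSubtree_graft_disjSum {s : Finset A} {t : Finset B'}
    (h : IsSubtree (graft T X z u) (s.disjSum t)) (hs : s.Nonempty) (ht : t.Nonempty) :
    z ∈ s := by
  obtain ⟨a, ha⟩ := hs
  obtain ⟨b, hb⟩ := ht
  obtain ⟨p⟩ := h.2.preconnected ⟨.inl a, by simpa⟩ ⟨.inr b, by simpa⟩
  -- the walk leaves the `T` side along an edge, and the only such edges start at `z`
  obtain ⟨⟨⟨⟨v, hv⟩, ⟨w, hw⟩⟩, hvw⟩, -, hvl, hwr⟩ :=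
    p.exists_boundary_dart {v | v.1.isLeft} rfl (by simp)
  rcases v with a' | _ <;> rcases w with _ | b' <;> simp at hvl hwr
  obtain ⟨rfl, -⟩ := (graft_adj_inl_inr (T := T)).mp hvw
  simpa using hv

lemma isSubtree_graft_disjSum_iff {s : Finset A} {t : Finset B'}
    (hs : s.Nonempty) (ht : t.Nonempty) :
    IsSubtree (graft T X z u) (s.disjSum t) ↔
      (IsSubtree T s ∧ z ∈ s) ∧
        (X.induce (insert u (Subtype.val '' (t : Set B')))).Connected := by
  refine ⟨fun h => ?_, fun ⟨⟨hT, hz⟩, hX⟩ => ?_⟩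
  · have hz := mem_of_isSubtree_graft_disjSum h hs ht
    rw [isSubtree_iff_connected, Finset.coe_disjSum] at h
    have hT := h.induce_image _ fun _ _ _ _ => graft_adj_elim_left
    have hX := h.induce_image _ fun _ _ _ _ => graft_adj_elim_right
    rw [Set.image_union, ← Set.image_comp, ← Set.image_comp, Sum.elim_comp_inl,
      Sum.elim_comp_inr, Set.image_id, (Finset.coe_nonempty.mpr ht).image_const,
      Set.union_singleton, Set.insert_eq_of_mem (Finset.mem_coe.mpr hz)] at hT
    rw [Set.image_union, ← Set.image_comp, ← Set.image_comp, Sum.elim_comp_inl,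
      Sum.elim_comp_inr, (Finset.coe_nonempty.mpr hs).image_const, Set.singleton_union] at hX
    exact ⟨⟨⟨hs, hT⟩, hz⟩, hX⟩
  · have e : Sum.inl '' (s : Set A) ∪ graftRight z u '' insert u (Subtype.val '' (t : Set B'))
        = ↑(s.disjSum t) := by
      rw [Set.image_insert_eq, graftRight_root, ← Set.image_comp, graftRight_comp_val,
        Set.union_insert, Set.insert_eq_of_mem (Set.mem_union_left _ (Set.mem_image_of_mem _ hz)),
        Finset.coe_disjSum]
    rw [isSubtree_iff_connected, ← e]
    refine induce_union_connected
      (hT.2.induce_image _ fun _ _ _ _ hab => .inr (graft_adj_inl_inl.mpr hab)).preconnected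
      (hX.induce_image _ fun _ _ _ _ hab => .inr (graft_adj_graftRight hab)).preconnected
      ⟨.inl z, Set.mem_image_of_mem _ hz, by simp⟩

lemma ncard_connected_insert_root_pos [Finite B] [Nontrivial B] (hX : X.Connected) :
    0 < {t : Finset B' | t.Nonempty ∧
      (X.induce (insert u (Subtype.val '' (t : Set B')))).Connected}.ncard := by
  obtain ⟨w, hw⟩ := hX.preconnected.exists_adj_of_nontrivial u
  rw [Set.ncard_pos]
  refine ⟨{⟨w, hw.ne'⟩}, Finset.singleton_nonempty _, ?_⟩
  rw [Finset.coe_singleton, Set.image_singleton]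
  exact induce_pair_connected_of_adj hw

lemma numSubtrees_graft [Finite A] [Finite B] (z : A) :
    numSubtrees (graft T X z u) = numSubtrees T +
      {t : Finset B' |
        (X.induce (Subtype.val '' (t : Set B'))).Connected}.ncard +
      numSubtreesContaining T z *
        {t : Finset B' | t.Nonempty ∧
          (X.induce (insert u (Subtype.val '' (t : Set B')))).Connected}.ncard := by
  set L := {s : Finset A | IsSubtree T s} ×ˢ ({∅} : Set (Finset B'))
  set R := ({∅} : Set (Finset A)) ×ˢ {t : Finset B' |
    (X.induce (Subtype.val '' (t : Set B'))).Connected}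
  set M := {s : Finset A | IsSubtree T s ∧ z ∈ s} ×ˢ {t : Finset B' | t.Nonempty ∧
    (X.induce (insert u (Subtype.val '' (t : Set B')))).Connected}
  have hsplit : Finset.sumEquiv '' {S | IsSubtree (graft T X z u) S} = L ∪ R ∪ M := by
    ext ⟨s, t⟩
    rw [OrderIso.image_eq_preimage_symm]
    simp only [Set.mem_preimage, Finset.sumEquiv_symm_apply, Set.mem_ofPred_eq, Set.mem_union,
      Set.mem_prod, Set.mem_singleton_iff, L, R, M]
    rcases s.eq_empty_or_nonempty with rfl | hs <;> rcases t.eq_empty_or_nonempty with rfl | ht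
    · rw [isSubtree_graft_empty_disjSum]
      simp [IsSubtree]
    · rw [isSubtree_graft_empty_disjSum]
      simp [ht.ne_empty]
    · rw [isSubtree_graft_disjSum_empty]
      simp [hs.ne_empty]
    · rw [isSubtree_graft_disjSum_iff hs ht]
      simp [hs.ne_empty, ht.ne_empty, ht]
  have hLR : Disjoint L R := by
    rw [Set.disjoint_left]
    rintro ⟨s, t⟩ ⟨⟨hs, -⟩, -⟩ ⟨rfl, -⟩
    exact Finset.not_nonempty_empty hs
  have hLRM : Disjoint (L ∪ R) M := by
    rw [Set.disjoint_left]
    rintro ⟨s, t⟩ (⟨-, rfl⟩ | ⟨rfl, -⟩) ⟨⟨-, hz⟩, ht, -⟩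
    exacts [Finset.not_nonempty_empty ht, Finset.notMem_empty z hz]
  unfold numSubtrees numSubtreesContaining
  rw [← Set.ncard_image_of_injective _ Finset.sumEquiv.injective, hsplit,
    Set.ncard_union_eq hLRM, Set.ncard_union_eq hLR, Set.ncard_prod, Set.ncard_prod,
    Set.ncard_prod, Set.ncard_singleton, Set.ncard_singleton]
  ring

end Graft

theorem numSubtrees_graft_lt_general {A B : Type} [Fintype A] [Fintype B]
    (T : SimpleGraph A) (X : SimpleGraph B) (hX : X.IsTree)
    (x y : A) (u : B) (hB : 2 ≤ Fintype.card B)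
    (h : numSubtreesContaining T y < numSubtreesContaining T x) :
    numSubtrees (graft T X y u) < numSubtrees (graft T X x u) := by
  have : Nontrivial B := Fintype.one_lt_card_iff_nontrivial.mp hB
  rw [numSubtrees_graft, numSubtrees_graft]
  exact Nat.add_lt_add_left
    (Nat.mul_lt_mul_of_pos_right h (ncard_connected_insert_root_pos hX.connected)) _

/-- Attaching a rooted tree `X` (with at least two vertices) at a vertex
`x` of `T` with `f_T(x) > f_T(y)` produces more subtrees than attaching it at `y`. -/
theorem numSubtrees_graft_lt {A B : Type} [Fintype A] [Fintype B]
    (T : SimpleGraph A) (X : SimpleGraph B) (hT : T.IsTree) (hX : X.IsTree)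
    (x y : A) (hxy : x ≠ y) (u : B) (hB : 2 ≤ Fintype.card B)
    (h : numSubtreesContaining T y < numSubtreesContaining T x) :
    numSubtrees (graft T X y u) < numSubtrees (graft T X x u) :=
  numSubtrees_graft_lt_general T X hX x y u hB h
end

section
/- Let T be a tree with distinct vertices x and y, and let X be a tree with at least two vertices and a distinguished root u. Let T' be the tree obtained from the disjoint union of T and X by identifying u with x, and let T'' be the tree obtained from the disjoint union of T and X by identifying u with y. If x is not a leaf of T, f_T(x) > f_T(y), and f*_T(x) ≥ f*_T(y), then F*(T') > F*(T''). -/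
open SimpleGraph

section GraftAux

open SimpleGraph Sum

private lemma reach_proj {α β : Type} {H : SimpleGraph α} {K : SimpleGraph β} (f : α → β)
    (hf : ∀ a a', H.Adj a a' → f a = f a' ∨ K.Adj (f a) (f a')) {v w : α}
    (h : H.Reachable v w) : K.Reachable (f v) (f w) := by
  obtain ⟨p⟩ := h
  induction p with
  | nil => exact Reachable.refl _
  | @cons v m w h p ih =>
      rcases hf _ _ h with he | ha
      · rw [he]; exact ih
      · exact (ha.reachable).trans ih

private lemma exists_adj_of_conn {α : Type} {G : SimpleGraph α} (hG : G.Connected) {a b : α}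
    (hne : a ≠ b) : ∃ c, G.Adj a c := by
  obtain ⟨p⟩ := hG.preconnected a b
  cases p with
  | nil => exact absurd rfl hne
  | cons h _ => exact ⟨_, h⟩

private lemma isLeaf_iff_degree_s15 {B : Type} [Fintype B] (X : SimpleGraph B)
    [DecidableRel X.Adj] (b : B) : IsLeaf X b ↔ X.degree b = 1 := by
  unfold IsLeaf
  rw [← card_neighborFinset_eq_degree, neighborFinset_def, Set.ncard_eq_toFinset_card']

private lemma exists_leaf_ne {B : Type} [Fintype B] {X : SimpleGraph B} (hX : X.IsTree)
    (hB : 2 ≤ Fintype.card B) (u : B) : ∃ b, b ≠ u ∧ IsLeaf X b := by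
  classical
  by_contra hcon
  push_neg at hcon
  have hdegpos : ∀ b : B, 0 < X.degree b := by
    intro b
    rw [degree_pos_iff_exists_adj]
    obtain ⟨c, hc⟩ := Fintype.exists_ne_of_one_lt_card (by omega) b
    exact exists_adj_of_conn hX.isConnected (Ne.symm hc)
  have hdeg2 : ∀ b : B, b ≠ u → 2 ≤ X.degree b := by
    intro b hb
    have h1 := hcon b hb
    rw [isLeaf_iff_degree_s15] at h1
    have := hdegpos b
    omega
  have he := hX.card_edgeFinset
  have hsum : ∑ v, X.degree v = 2 * X.edgeFinset.card := X.sum_degrees_eq_twice_card_edges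
  have hsplit : ∑ v, X.degree v = X.degree u + ∑ v ∈ Finset.univ.erase u, X.degree v := by
    rw [← Finset.sum_erase_add _ _ (Finset.mem_univ u)]
    ring
  have hcard : (Finset.univ.erase u).card = Fintype.card B - 1 := by
    rw [Finset.card_erase_of_mem (Finset.mem_univ u), Finset.card_univ]
  have hlow : (Fintype.card B - 1) * 2 ≤ ∑ v ∈ Finset.univ.erase u, X.degree v := by
    have hh := Finset.card_nsmul_le_sum (Finset.univ.erase u) (fun v => X.degree v) 2
      (fun v hv => hdeg2 v (Finset.ne_of_mem_erase hv))
    rwa [smul_eq_mul, hcard] at hh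
  have := hdegpos u
  omega

private lemma induce_univ_connected {B : Type} {X : SimpleGraph B} (hX : X.Connected) :
    (X.induce (Set.univ : Set B)).Connected := by
  let φ : X →g X.induce (Set.univ : Set B) :=
    ⟨fun b => ⟨b, trivial⟩, by
      intro a b hab
      simpa only [comap_adj, Function.Embedding.coe_subtype] using hab⟩
  rw [connected_iff]
  constructor
  · rintro ⟨v, -⟩ ⟨w, -⟩
    exact (hX.preconnected v w).map φ
  · obtain ⟨b⟩ := hX.nonempty
    exact ⟨⟨b, trivial⟩⟩

private def leafSubtreeSet {V : Type} (G : SimpleGraph V) : Set (Finset V) :=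
  {s | IsSubtree G s ∧ ∃ v ∈ s, IsLeaf G v}

private lemma numLeafSubtrees_eq' {V : Type} (G : SimpleGraph V) :
    numLeafSubtrees G = (leafSubtreeSet G).ncard := rfl

def leftPart {A B : Type} {u : B} (S : Set (A ⊕ {b : B // b ≠ u})) : Set A :=
  {a | Sum.inl a ∈ S}

def rightPart {A B : Type} {u : B} (S : Set (A ⊕ {b : B // b ≠ u})) : Set B :=
  {b | ∃ h : b ≠ u, Sum.inr ⟨b, h⟩ ∈ S}

private def intoS {A B : Type} {u : B} {z : A} [DecidableEq B]
    (S : Set (A ⊕ {b : B // b ≠ u})) (hz : Sum.inl z ∈ S)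
    (c : ↥(insert u (rightPart S))) : ↥S :=
  if h : (c : B) = u then ⟨Sum.inl z, hz⟩
  else ⟨Sum.inr ⟨↑c, h⟩, by
    rcases Set.mem_insert_iff.mp c.2 with h' | ⟨hne, hS⟩
    · exact absurd h' h
    · exact hS⟩

private lemma intoS_val_ne {A B : Type} {u : B} {z : A} [DecidableEq B]
    {S : Set (A ⊕ {b : B // b ≠ u})} (hz : Sum.inl z ∈ S)
    (c : ↥(insert u (rightPart S))) (h : (c : B) ≠ u) :
    (intoS S hz c : A ⊕ {b : B // b ≠ u}) = Sum.inr ⟨↑c, h⟩ := by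
  rw [intoS, dif_neg h]

private lemma intoS_val_u {A B : Type} {u : B} {z : A} [DecidableEq B]
    {S : Set (A ⊕ {b : B // b ≠ u})} (hz : Sum.inl z ∈ S)
    (c : ↥(insert u (rightPart S))) (h : (c : B) = u) :
    (intoS S hz c : A ⊕ {b : B // b ≠ u}) = Sum.inl z := by
  rw [intoS, dif_pos h]

variable {A B : Type} (T : SimpleGraph A) (X : SimpleGraph B) (u : B) (z : A)

lemma graft_adj_ll {a a' : A} :
    (graft T X z u).Adj (Sum.inl a) (Sum.inl a') ↔ T.Adj a a' := by
  simp only [graft, fromRel_adj]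
  constructor
  · rintro ⟨hne, h | h⟩
    · exact h
    · exact h.symm
  · intro h
    exact ⟨by simpa using h.ne, Or.inl h⟩

lemma graft_adj_lr {a : A} {b : {b : B // b ≠ u}} :
    (graft T X z u).Adj (Sum.inl a) (Sum.inr b) ↔ a = z ∧ X.Adj u ↑b := by
  simp only [graft, fromRel_adj]
  constructor
  · rintro ⟨-, h | h⟩
    · exact h
    · exact h.elim
  · intro h
    exact ⟨by simp, Or.inl h⟩

lemma graft_adj_rl {a : A} {b : {b : B // b ≠ u}} :
    (graft T X z u).Adj (Sum.inr b) (Sum.inl a) ↔ a = z ∧ X.Adj u ↑b := by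
  rw [adj_comm]; exact graft_adj_lr T X u z

lemma graft_adj_rr {b b' : {b : B // b ≠ u}} :
    (graft T X z u).Adj (Sum.inr b) (Sum.inr b') ↔ X.Adj ↑b ↑b' := by
  simp only [graft, fromRel_adj]
  constructor
  · rintro ⟨hne, h | h⟩
    · exact h
    · exact h.symm
  · intro h
    refine ⟨?_, Or.inl h⟩
    simp only [ne_eq, Sum.inr.injEq]
    exact fun he => h.ne (by rw [he])

lemma graft_leaf_inr (b : {b : B // b ≠ u}) :
    IsLeaf (graft T X z u) (Sum.inr b) ↔ IsLeaf X ↑b := by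
  have himg : X.neighborSet ↑b =
      (Sum.elim (fun _ : A => u) (fun c : {b : B // b ≠ u} => ↑c)) ''
        ((graft T X z u).neighborSet (Sum.inr b)) := by
    ext c
    constructor
    · intro hc
      by_cases hcu : c = u
      · subst hcu
        refine ⟨Sum.inl z, ?_, rfl⟩
        rw [mem_neighborSet, graft_adj_rl]
        exact ⟨rfl, hc.symm⟩
      · refine ⟨Sum.inr ⟨c, hcu⟩, ?_, rfl⟩
        rw [mem_neighborSet, graft_adj_rr]
        exact hc
    · rintro ⟨v, hv, rfl⟩
      rcases v with a | c
      · rw [mem_neighborSet, graft_adj_rl] at hv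
        exact (hv.2.symm : X.Adj ↑b u)
      · rw [mem_neighborSet, graft_adj_rr] at hv
        exact hv
  have hinj : Set.InjOn (Sum.elim (fun _ : A => u) (fun c : {b : B // b ≠ u} => ↑c))
      ((graft T X z u).neighborSet (Sum.inr b)) := by
    rintro (a | c) hv (a' | c') hw he
    · rw [mem_neighborSet, graft_adj_rl] at hv hw
      rw [hv.1, hw.1]
    · exact absurd he.symm c'.2
    · exact absurd he c.2
    · simpa [Subtype.ext_iff] using he
  unfold IsLeaf
  rw [himg, Set.ncard_image_of_injOn hinj]

lemma graft_leaf_inl {a : A} (ha : a ≠ z) :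
    IsLeaf (graft T X z u) (Sum.inl a) ↔ IsLeaf T a := by
  have himg : (graft T X z u).neighborSet (Sum.inl a) = Sum.inl '' (T.neighborSet a) := by
    ext v
    rcases v with a' | c
    · simp [mem_neighborSet, graft_adj_ll]
    · simp [mem_neighborSet, graft_adj_lr, ha]
  unfold IsLeaf
  rw [himg, Set.ncard_image_of_injective _ Sum.inl_injective]

lemma graft_not_leaf_inl [Fintype A] [Fintype B]
    (ha : ∃ a', T.Adj z a') (hb : ∃ b', X.Adj u b') :
    ¬ IsLeaf (graft T X z u) (Sum.inl z) := by
  obtain ⟨a₀, ha₀⟩ := ha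
  obtain ⟨b₀, hb₀⟩ := hb
  have h1 : Sum.inl a₀ ∈ (graft T X z u).neighborSet (Sum.inl z) := by
    rw [mem_neighborSet, graft_adj_ll]; exact ha₀
  have h2 : Sum.inr ⟨b₀, hb₀.ne'⟩ ∈ (graft T X z u).neighborSet (Sum.inl z) := by
    rw [mem_neighborSet, graft_adj_lr]; exact ⟨rfl, hb₀⟩
  intro hleaf
  unfold IsLeaf at hleaf
  have : 1 < ((graft T X z u).neighborSet (Sum.inl z)).ncard := by
    rw [Set.one_lt_ncard (Set.toFinite _)]
    exact ⟨_, h1, _, h2, by simp⟩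
  omega

lemma conn_left {S : Set (A ⊕ {b : B // b ≠ u})} (hall : ∀ v ∈ S, ∃ a, v = Sum.inl a) :
    ((graft T X z u).induce S).Connected ↔ (T.induce (leftPart S)).Connected := by
  constructor
  · intro hc
    have hne : (leftPart S).Nonempty := by
      obtain ⟨⟨v, hv⟩⟩ := hc.nonempty
      obtain ⟨a, rfl⟩ := hall v hv
      exact ⟨a, hv⟩
    obtain ⟨a₀, ha₀⟩ := hne
    set f : ↥S → ↥(leftPart S) := fun v =>
      match v with
      | ⟨Sum.inl a, h⟩ => ⟨a, h⟩
      | ⟨Sum.inr _, _⟩ => ⟨a₀, ha₀⟩ with hf_def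
    have hf : ∀ v w : ↥S, ((graft T X z u).induce S).Adj v w →
        f v = f w ∨ (T.induce (leftPart S)).Adj (f v) (f w) := by
      rintro ⟨va | vb, hv⟩ ⟨wa | wb, hw⟩ hadj
      · right
        simp only [comap_adj, Function.Embedding.coe_subtype, graft_adj_ll] at hadj ⊢
        exact hadj
      · obtain ⟨a, ha⟩ := hall _ hw; simp at ha
      · obtain ⟨a, ha⟩ := hall _ hv; simp at ha
      · obtain ⟨a, ha⟩ := hall _ hv; simp at ha
    rw [connected_iff]
    constructor
    · rintro ⟨a, ha⟩ ⟨a', ha'⟩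
      exact reach_proj f hf (hc.preconnected ⟨Sum.inl a, ha⟩ ⟨Sum.inl a', ha'⟩)
    · exact ⟨⟨a₀, ha₀⟩⟩
  · intro hc
    let gT : T.induce (leftPart S) →g (graft T X z u).induce S :=
      ⟨fun p => ⟨Sum.inl p.1, p.2⟩, by
        rintro ⟨a, ha⟩ ⟨a', ha'⟩ hadj
        simp only [comap_adj, Function.Embedding.coe_subtype, graft_adj_ll] at hadj ⊢
        exact hadj⟩
    rw [connected_iff]
    constructor
    · rintro ⟨v, hv⟩ ⟨w, hw⟩
      obtain ⟨a, rfl⟩ := hall v hv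
      obtain ⟨a', rfl⟩ := hall w hw
      exact (hc.preconnected ⟨a, hv⟩ ⟨a', hw⟩).map gT
    · obtain ⟨⟨a, ha⟩⟩ := hc.nonempty
      exact ⟨⟨Sum.inl a, ha⟩⟩

lemma conn_right {S : Set (A ⊕ {b : B // b ≠ u})} (hall : ∀ v ∈ S, ∃ b, v = Sum.inr b) :
    ((graft T X z u).induce S).Connected ↔ (X.induce (rightPart S)).Connected := by
  constructor
  · intro hc
    have hne : (rightPart S).Nonempty := by
      obtain ⟨⟨v, hv⟩⟩ := hc.nonempty
      obtain ⟨b, rfl⟩ := hall v hv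
      exact ⟨↑b, b.2, hv⟩
    obtain ⟨b₀, hb₀⟩ := hne
    set f : ↥S → ↥(rightPart S) := fun v =>
      match v with
      | ⟨Sum.inl _, _⟩ => ⟨b₀, hb₀⟩
      | ⟨Sum.inr b, h⟩ => ⟨↑b, b.2, h⟩ with hf_def
    have hf : ∀ v w : ↥S, ((graft T X z u).induce S).Adj v w →
        f v = f w ∨ (X.induce (rightPart S)).Adj (f v) (f w) := by
      rintro ⟨va | vb, hv⟩ ⟨wa | wb, hw⟩ hadj
      · obtain ⟨b, hb⟩ := hall _ hv; simp at hb
      · obtain ⟨b, hb⟩ := hall _ hv; simp at hb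
      · obtain ⟨b, hb⟩ := hall _ hw; simp at hb
      · right
        simp only [comap_adj, Function.Embedding.coe_subtype, graft_adj_rr] at hadj ⊢
        exact hadj
    rw [connected_iff]
    constructor
    · rintro ⟨b, hb, hbS⟩ ⟨b', hb', hbS'⟩
      exact reach_proj f hf (hc.preconnected ⟨Sum.inr ⟨b, hb⟩, hbS⟩ ⟨Sum.inr ⟨b', hb'⟩, hbS'⟩)
    · exact ⟨⟨b₀, hb₀⟩⟩
  · intro hc
    let gX : X.induce (rightPart S) →g (graft T X z u).induce S :=
      ⟨fun p => ⟨Sum.inr ⟨p.1, p.2.choose⟩, p.2.choose_spec⟩, by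
        rintro ⟨b, hb⟩ ⟨b', hb'⟩ hadj
        simp only [comap_adj, Function.Embedding.coe_subtype, graft_adj_rr] at hadj ⊢
        exact hadj⟩
    rw [connected_iff]
    constructor
    · rintro ⟨v, hv⟩ ⟨w, hw⟩
      obtain ⟨b, rfl⟩ := hall v hv
      obtain ⟨b', rfl⟩ := hall w hw
      exact (hc.preconnected ⟨↑b, b.2, hv⟩ ⟨↑b', b'.2, hw⟩).map gX
    · obtain ⟨⟨b, hb⟩⟩ := hc.nonempty
      exact ⟨⟨Sum.inr ⟨b, hb.choose⟩, hb.choose_spec⟩⟩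

private lemma cross_mem {S : Set (A ⊕ {b : B // b ≠ u})} :
    ∀ {v w : ↥S}, ((graft T X z u).induce S).Walk v w →
      (∃ a, (v : A ⊕ {b : B // b ≠ u}) = Sum.inl a) →
      (∃ b, (w : A ⊕ {b : B // b ≠ u}) = Sum.inr b) → Sum.inl z ∈ S := by
  intro v w p
  induction p with
  | nil =>
      rintro ⟨a, ha⟩ ⟨b, hb⟩
      rw [ha] at hb
      simp at hb
  | @cons v m w h p ih =>
      rintro ⟨a, ha⟩ hw
      rcases hm : (m : A ⊕ {b : B // b ≠ u}) with ma | mb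
      · exact ih ⟨ma, hm⟩ hw
      · have hadj : (graft T X z u).Adj ↑v ↑m := h
        rw [ha, hm, graft_adj_lr] at hadj
        have hv := v.2
        rw [ha, hadj.1] at hv
        exact hv

lemma conn_mixed [DecidableEq B] {S : Set (A ⊕ {b : B // b ≠ u})}
    (hA : (leftPart S).Nonempty) (hB : (rightPart S).Nonempty) :
    ((graft T X z u).induce S).Connected ↔
      z ∈ leftPart S ∧ (T.induce (leftPart S)).Connected ∧
        (X.induce (insert u (rightPart S))).Connected := by
  constructor
  · intro hc
    obtain ⟨a₀, ha₀⟩ := hA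
    obtain ⟨b₀, hb₀, hbS₀⟩ := hB
    have hzS : Sum.inl z ∈ S := by
      obtain ⟨p⟩ := hc.preconnected ⟨Sum.inl a₀, ha₀⟩ ⟨Sum.inr ⟨b₀, hb₀⟩, hbS₀⟩
      exact cross_mem T X u z p ⟨a₀, rfl⟩ ⟨⟨b₀, hb₀⟩, rfl⟩
    refine ⟨hzS, ?_, ?_⟩
    · set f : ↥S → ↥(leftPart S) := fun v =>
        match v with
        | ⟨Sum.inl a, h⟩ => ⟨a, h⟩
        | ⟨Sum.inr _, _⟩ => ⟨z, hzS⟩ with hf_def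
      have hf : ∀ v w : ↥S, ((graft T X z u).induce S).Adj v w →
          f v = f w ∨ (T.induce (leftPart S)).Adj (f v) (f w) := by
        rintro ⟨va | vb, hv⟩ ⟨wa | wb, hw⟩ hadj
        · right
          simp only [comap_adj, Function.Embedding.coe_subtype, graft_adj_ll] at hadj ⊢
          exact hadj
        · left
          have hadj' : (graft T X z u).Adj (Sum.inl va) (Sum.inr wb) := hadj
          rw [graft_adj_lr] at hadj'
          exact Subtype.ext hadj'.1
        · left
          have hadj' : (graft T X z u).Adj (Sum.inr vb) (Sum.inl wa) := hadj
          rw [graft_adj_rl] at hadj'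
          exact Subtype.ext hadj'.1.symm
        · left; rfl
      rw [connected_iff]
      constructor
      · rintro ⟨a, ha⟩ ⟨a', ha'⟩
        exact reach_proj f hf (hc.preconnected ⟨Sum.inl a, ha⟩ ⟨Sum.inl a', ha'⟩)
      · exact ⟨⟨a₀, ha₀⟩⟩
    · set f : ↥S → ↥(insert u (rightPart S)) := fun v =>
        match v with
        | ⟨Sum.inl _, _⟩ => ⟨u, Set.mem_insert u _⟩
        | ⟨Sum.inr b, h⟩ => ⟨↑b, Set.mem_insert_iff.mpr (Or.inr ⟨b.2, h⟩)⟩ with hf_def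
      have hf : ∀ v w : ↥S, ((graft T X z u).induce S).Adj v w →
          f v = f w ∨ (X.induce (insert u (rightPart S))).Adj (f v) (f w) := by
        rintro ⟨va | vb, hv⟩ ⟨wa | wb, hw⟩ hadj
        · left; rfl
        · right
          have hadj' : (graft T X z u).Adj (Sum.inl va) (Sum.inr wb) := hadj
          rw [graft_adj_lr] at hadj'
          simp only [comap_adj, Function.Embedding.coe_subtype]
          exact hadj'.2
        · right
          have hadj' : (graft T X z u).Adj (Sum.inr vb) (Sum.inl wa) := hadj
          rw [graft_adj_rl] at hadj'
          simp only [comap_adj, Function.Embedding.coe_subtype]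
          exact hadj'.2.symm
        · right
          have hadj' : (graft T X z u).Adj (Sum.inr vb) (Sum.inr wb) := hadj
          rw [graft_adj_rr] at hadj'
          simp only [comap_adj, Function.Embedding.coe_subtype]
          exact hadj'
      have lift : ∀ c : ↥(insert u (rightPart S)), ∃ v : ↥S, f v = c := by
        rintro ⟨c, hc'⟩
        rcases Set.mem_insert_iff.mp hc' with rfl | ⟨hcne, hcS⟩
        · exact ⟨⟨Sum.inl z, hzS⟩, rfl⟩
        · exact ⟨⟨Sum.inr ⟨c, hcne⟩, hcS⟩, rfl⟩
      rw [connected_iff]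
      constructor
      · intro c c'
        obtain ⟨v, rfl⟩ := lift c
        obtain ⟨w, rfl⟩ := lift c'
        exact reach_proj f hf (hc.preconnected v w)
      · exact ⟨⟨u, Set.mem_insert u _⟩⟩
  · rintro ⟨hz, hTc, hXc⟩
    have hzS : Sum.inl z ∈ S := hz
    let gT : T.induce (leftPart S) →g (graft T X z u).induce S :=
      ⟨fun p => ⟨Sum.inl p.1, p.2⟩, by
        rintro ⟨a, ha⟩ ⟨a', ha'⟩ hadj
        simp only [comap_adj, Function.Embedding.coe_subtype, graft_adj_ll] at hadj ⊢
        exact hadj⟩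
    have hf : ∀ c c' : ↥(insert u (rightPart S)),
        (X.induce (insert u (rightPart S))).Adj c c' →
          intoS S hzS c = intoS S hzS c' ∨
            ((graft T X z u).induce S).Adj (intoS S hzS c) (intoS S hzS c') := by
      intro c c' hadj
      have hXadj : X.Adj ↑c ↑c' := hadj
      right
      have goal : (graft T X z u).Adj ↑(intoS S hzS c) ↑(intoS S hzS c') := by
        by_cases h : (c : B) = u <;> by_cases h' : (c' : B) = u
        · exact absurd hXadj (by rw [h, h']; exact X.irrefl)
        · rw [intoS_val_u hzS c h, intoS_val_ne hzS c' h', graft_adj_lr]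
          exact ⟨rfl, by rwa [h] at hXadj⟩
        · rw [intoS_val_ne hzS c h, intoS_val_u hzS c' h', graft_adj_rl]
          exact ⟨rfl, by have := hXadj.symm; rwa [h'] at this⟩
        · rw [intoS_val_ne hzS c h, intoS_val_ne hzS c' h', graft_adj_rr]
          exact hXadj
      exact goal
    have hub : ∀ v : ↥S, ((graft T X z u).induce S).Reachable v ⟨Sum.inl z, hzS⟩ := by
      rintro ⟨va | vb, hv⟩
      · exact (hTc.preconnected ⟨va, hv⟩ ⟨z, hz⟩).map gT
      · have hr := reach_proj _ hf (hXc.preconnected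
            ⟨↑vb, Set.mem_insert_iff.mpr (Or.inr ⟨vb.2, hv⟩)⟩ ⟨u, Set.mem_insert u _⟩)
        have h1 : intoS S hzS ⟨↑vb, Set.mem_insert_iff.mpr (Or.inr ⟨vb.2, hv⟩)⟩ =
            (⟨Sum.inr vb, hv⟩ : ↥S) := Subtype.ext (intoS_val_ne hzS _ vb.2)
        have h2 : intoS S hzS ⟨u, Set.mem_insert u _⟩ = (⟨Sum.inl z, hzS⟩ : ↥S) :=
          Subtype.ext (intoS_val_u hzS _ rfl)
        rw [h1, h2] at hr
        exact hr
    rw [connected_iff]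
    exact ⟨fun v w => (hub v).trans (hub w).symm, ⟨⟨Sum.inl z, hzS⟩⟩⟩

private def PLs (u : B) (G : SimpleGraph (A ⊕ {b : B // b ≠ u})) :
    Set (Finset (A ⊕ {b : B // b ≠ u})) :=
  {S | S ∈ leafSubtreeSet G ∧ ∀ v ∈ S, ∃ a, v = Sum.inl a}

private def PRs (u : B) (G : SimpleGraph (A ⊕ {b : B // b ≠ u})) :
    Set (Finset (A ⊕ {b : B // b ≠ u})) :=
  {S | S ∈ leafSubtreeSet G ∧ ∀ v ∈ S, ∃ b, v = Sum.inr b}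

private def PMs (u : B) (G : SimpleGraph (A ⊕ {b : B // b ≠ u})) :
    Set (Finset (A ⊕ {b : B // b ≠ u})) :=
  {S | S ∈ leafSubtreeSet G ∧ (∃ v ∈ S, ∃ a, v = Sum.inl a) ∧ (∃ v ∈ S, ∃ b, v = Sum.inr b)}

private lemma LS_card [Fintype A] [Fintype B] {u : B} (G : SimpleGraph (A ⊕ {b : B // b ≠ u})) :
    (leafSubtreeSet G).ncard = (PLs u G).ncard + (PRs u G).ncard + (PMs u G).ncard := by
  classical
  have hcover : leafSubtreeSet G = (PLs u G ∪ PRs u G) ∪ PMs u G := by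
    ext S
    constructor
    · intro hS
      by_cases h1 : ∀ v ∈ S, ∃ a, v = Sum.inl a
      · exact Or.inl (Or.inl ⟨hS, h1⟩)
      by_cases h2 : ∀ v ∈ S, ∃ b, v = Sum.inr b
      · exact Or.inl (Or.inr ⟨hS, h2⟩)
      push_neg at h1 h2
      obtain ⟨v1, hv1, hv1'⟩ := h1
      obtain ⟨v2, hv2, hv2'⟩ := h2
      refine Or.inr ⟨hS, ⟨v2, hv2, ?_⟩, ⟨v1, hv1, ?_⟩⟩
      · rcases v2 with a | b
        · exact ⟨a, rfl⟩
        · exact absurd rfl (hv2' b)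
      · rcases v1 with a | b
        · exact absurd rfl (hv1' a)
        · exact ⟨b, rfl⟩
    · rintro ((h | h) | h) <;> exact h.1
  have d1 : Disjoint (PLs u G) (PRs u G) := by
    rw [Set.disjoint_left]
    rintro S ⟨hS, hall⟩ ⟨-, hall'⟩
    obtain ⟨v, hv⟩ := hS.1.1
    obtain ⟨a, rfl⟩ := hall v hv
    obtain ⟨b, hb⟩ := hall' _ hv
    simp at hb
  have d2 : Disjoint (PLs u G ∪ PRs u G) (PMs u G) := by
    rw [Set.disjoint_left]
    rintro S (⟨hS, hall⟩ | ⟨hS, hall⟩) ⟨-, ⟨vl, hvl, al, hal⟩, ⟨vr, hvr, br, hbr⟩⟩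
    · obtain ⟨a, rfl⟩ := hall vr hvr
      simp at hbr
    · obtain ⟨b, rfl⟩ := hall vl hvl
      simp at hal
  rw [hcover, Set.ncard_union_eq d2 (Set.toFinite _) (Set.toFinite _),
    Set.ncard_union_eq d1 (Set.toFinite _) (Set.toFinite _)]

private def Q1 (T : SimpleGraph A) (z : A) : Set (Finset A) :=
  {sa | IsSubtree T sa ∧ ∃ a ∈ sa, a ≠ z ∧ IsLeaf T a}

private lemma PL_eq [Fintype A] [Fintype B]
    (ha : ∃ a', T.Adj z a') (hb : ∃ b', X.Adj u b') :
    PLs u (graft T X z u) =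
      (fun sa : Finset A => sa.map ⟨Sum.inl, Sum.inl_injective⟩) '' Q1 T z := by
  classical
  ext S
  constructor
  · rintro ⟨⟨⟨hne, hconn⟩, hleaf⟩, hall⟩
    set sa := S.preimage Sum.inl Sum.inl_injective.injOn with hsa_def
    have hSrepr : S = sa.map ⟨Sum.inl, Sum.inl_injective⟩ := by
      ext v
      rcases v with a | b
      · simp [hsa_def, Finset.mem_preimage]
      · simp only [Finset.mem_map, Finset.mem_preimage, hsa_def,
          Function.Embedding.coeFn_mk]
        constructor
        · intro hm
          obtain ⟨a, ha'⟩ := hall _ hm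
          simp at ha'
        · rintro ⟨a, -, ha'⟩
          simp at ha'
    have hallset : ∀ v ∈ (↑S : Set (A ⊕ {b : B // b ≠ u})), ∃ a, v = Sum.inl a :=
      fun v hv => hall v hv
    have hlp : leftPart (↑S : Set (A ⊕ {b : B // b ≠ u})) = ↑sa := by
      ext a; simp [leftPart, hsa_def, Finset.mem_preimage]
    refine ⟨sa, ⟨⟨?_, ?_⟩, ?_⟩, hSrepr.symm⟩
    · obtain ⟨v, hv⟩ := hne
      obtain ⟨a, rfl⟩ := hall v hv
      exact ⟨a, by simp [hsa_def, Finset.mem_preimage, hv]⟩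
    · have hcl := (conn_left T X u z hallset).mp hconn
      rwa [hlp] at hcl
    · obtain ⟨v, hv, hvleaf⟩ := hleaf
      obtain ⟨a, rfl⟩ := hall v hv
      by_cases haz : a = z
      · rw [haz] at hvleaf
        exact absurd hvleaf (graft_not_leaf_inl T X u z ha hb)
      · rw [graft_leaf_inl T X u z haz] at hvleaf
        exact ⟨a, by simp [hsa_def, Finset.mem_preimage, hv], haz, hvleaf⟩
  · rintro ⟨sa, ⟨⟨hne, hconn⟩, a₀, ha₀, ha₀z, ha₀leaf⟩, rfl⟩
    have hall : ∀ v ∈ sa.map (⟨Sum.inl, Sum.inl_injective⟩ : A ↪ A ⊕ {b : B // b ≠ u}),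
        ∃ a, v = Sum.inl a := by
      intro v hv
      obtain ⟨a, -, rfl⟩ := Finset.mem_map.mp hv
      exact ⟨a, rfl⟩
    have hallset : ∀ v ∈ (↑(sa.map (⟨Sum.inl, Sum.inl_injective⟩ : A ↪ A ⊕ {b : B // b ≠ u})) :
        Set (A ⊕ {b : B // b ≠ u})), ∃ a, v = Sum.inl a := fun v hv => hall v hv
    have hlp : leftPart (↑(sa.map (⟨Sum.inl, Sum.inl_injective⟩ : A ↪ A ⊕ {b : B // b ≠ u})) :
        Set (A ⊕ {b : B // b ≠ u})) = ↑sa := by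
      ext a; simp [leftPart]
    refine ⟨⟨⟨?_, ?_⟩, ?_⟩, hall⟩
    · obtain ⟨a, ha'⟩ := hne
      exact ⟨Sum.inl a, Finset.mem_map_of_mem _ ha'⟩
    · rw [conn_left T X u z hallset, hlp]
      exact hconn
    · exact ⟨Sum.inl a₀, Finset.mem_map_of_mem _ ha₀,
        (graft_leaf_inl T X u z ha₀z).mpr ha₀leaf⟩

private lemma PR_eq [Fintype A] [Fintype B] :
    PRs u (graft T X z u) =
      {S : Finset (A ⊕ {b : B // b ≠ u}) | (∀ v ∈ S, ∃ b, v = Sum.inr b) ∧ S.Nonempty ∧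
        (X.induce (rightPart (↑S : Set (A ⊕ {b : B // b ≠ u})))).Connected ∧
        ∃ b ∈ rightPart (↑S : Set (A ⊕ {b : B // b ≠ u})), IsLeaf X b} := by
  ext S
  constructor
  · rintro ⟨⟨⟨hne, hconn⟩, hleaf⟩, hall⟩
    have hallset : ∀ v ∈ (↑S : Set (A ⊕ {b : B // b ≠ u})), ∃ b, v = Sum.inr b :=
      fun v hv => hall v hv
    refine ⟨hall, hne, (conn_right T X u z hallset).mp hconn, ?_⟩
    obtain ⟨v, hv, hvleaf⟩ := hleaf
    obtain ⟨b, rfl⟩ := hall v hv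
    exact ⟨↑b, ⟨b.2, hv⟩, (graft_leaf_inr T X u z b).mp hvleaf⟩
  · rintro ⟨hall, hne, hconn, b, ⟨hbu, hbS⟩, hbleaf⟩
    have hallset : ∀ v ∈ (↑S : Set (A ⊕ {b : B // b ≠ u})), ∃ b, v = Sum.inr b :=
      fun v hv => hall v hv
    refine ⟨⟨⟨hne, (conn_right T X u z hallset).mpr hconn⟩, ?_⟩, hall⟩
    exact ⟨Sum.inr ⟨b, hbu⟩, hbS, (graft_leaf_inr T X u z ⟨b, hbu⟩).mpr hbleaf⟩

private def QM (T : SimpleGraph A) (X : SimpleGraph B) (u : B) (z : A) :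
    Set (Finset A × Finset {b : B // b ≠ u}) :=
  {p | (IsSubtree T p.1 ∧ z ∈ p.1) ∧
    (p.2.Nonempty ∧
      (X.induce (insert u (Subtype.val '' (↑p.2 : Set {b : B // b ≠ u})))).Connected) ∧
    ((∃ b ∈ p.2, IsLeaf X (↑b : B)) ∨ ∃ a ∈ p.1, a ≠ z ∧ IsLeaf T a)}

private lemma lp_disjSum (sa : Finset A) (sb : Finset {b : B // b ≠ u}) :
    leftPart (↑(sa.disjSum sb) : Set (A ⊕ {b : B // b ≠ u})) = ↑sa := by
  ext a; simp [leftPart]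

private lemma rp_disjSum (sa : Finset A) (sb : Finset {b : B // b ≠ u}) :
    rightPart (↑(sa.disjSum sb) : Set (A ⊕ {b : B // b ≠ u})) =
      Subtype.val '' (↑sb : Set {b : B // b ≠ u}) := by
  ext c
  constructor
  · rintro ⟨hcu, hmem⟩
    exact ⟨⟨c, hcu⟩, by simpa using hmem, rfl⟩
  · rintro ⟨⟨c, hcu⟩, hmem, rfl⟩
    exact ⟨hcu, by simpa using hmem⟩

private lemma PM_eq [Fintype A] [Fintype B]
    (ha : ∃ a', T.Adj z a') (hb : ∃ b', X.Adj u b') :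
    PMs u (graft T X z u) =
      (fun p : Finset A × Finset {b : B // b ≠ u} => p.1.disjSum p.2) '' QM T X u z := by
  classical
  ext S
  constructor
  · rintro ⟨⟨⟨hne, hconn⟩, hleaf⟩, ⟨vL, hvL, aL, haL⟩, ⟨vR, hvR, bR, hbR⟩⟩
    subst haL
    subst hbR
    set sa := S.preimage Sum.inl Sum.inl_injective.injOn with hsa_def
    set sb := S.preimage Sum.inr Sum.inr_injective.injOn with hsb_def
    have hSrepr : S = sa.disjSum sb := by
      ext v
      rcases v with a | b
      · simp [hsa_def, Finset.mem_preimage]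
      · simp [hsb_def, Finset.mem_preimage]
    have hlp : leftPart (↑S : Set (A ⊕ {b : B // b ≠ u})) = ↑sa := by
      ext a; simp [leftPart, hsa_def, Finset.mem_preimage]
    have hrp : rightPart (↑S : Set (A ⊕ {b : B // b ≠ u})) =
        Subtype.val '' (↑sb : Set {b : B // b ≠ u}) := by
      ext c
      constructor
      · rintro ⟨hcu, hmem⟩
        exact ⟨⟨c, hcu⟩, by simpa [hsb_def, Finset.mem_preimage] using hmem, rfl⟩
      · rintro ⟨⟨c, hcu⟩, hmem, rfl⟩
        exact ⟨hcu, by simpa [hsb_def, Finset.mem_preimage] using hmem⟩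
    have hAne : (leftPart (↑S : Set (A ⊕ {b : B // b ≠ u}))).Nonempty := ⟨aL, hvL⟩
    have hBne : (rightPart (↑S : Set (A ⊕ {b : B // b ≠ u}))).Nonempty :=
      ⟨↑bR, bR.2, hvR⟩
    obtain ⟨hzmem, hTconn, hXconn⟩ := (conn_mixed T X u z hAne hBne).mp hconn
    have hzsa : z ∈ sa := by
      have := hzmem
      rw [hlp] at this
      exact this
    refine ⟨(sa, sb), ⟨⟨⟨⟨z, hzsa⟩, ?_⟩, hzsa⟩, ⟨?_, ?_⟩, ?_⟩, hSrepr.symm⟩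
    · have := hTconn
      rwa [hlp] at this
    · exact ⟨bR, by simp [hsb_def, Finset.mem_preimage, hvR]⟩
    · have := hXconn
      rwa [hrp] at this
    · obtain ⟨v, hv, hvleaf⟩ := hleaf
      rcases v with a | b
      · by_cases haz : a = z
        · rw [haz] at hvleaf
          exact absurd hvleaf (graft_not_leaf_inl T X u z ha hb)
        · rw [graft_leaf_inl T X u z haz] at hvleaf
          exact Or.inr ⟨a, by simp [hsa_def, Finset.mem_preimage, hv], haz, hvleaf⟩
      · rw [graft_leaf_inr T X u z b] at hvleaf
        exact Or.inl ⟨b, by simp [hsb_def, Finset.mem_preimage, hv], hvleaf⟩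
  · rintro ⟨⟨sa, sb⟩, ⟨⟨hsub, hz⟩, ⟨hsbne, hXconn⟩, hleaf⟩, rfl⟩
    have hlp := lp_disjSum (u := u) sa sb
    have hrp := rp_disjSum (u := u) sa sb
    have hAne : (leftPart (↑(sa.disjSum sb) : Set (A ⊕ {b : B // b ≠ u}))).Nonempty := by
      rw [hlp]; exact ⟨z, hz⟩
    have hBne : (rightPart (↑(sa.disjSum sb) : Set (A ⊕ {b : B // b ≠ u}))).Nonempty := by
      rw [hrp]
      obtain ⟨b, hbm⟩ := hsbne
      exact ⟨↑b, b, hbm, rfl⟩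
    have hconn : ((graft T X z u).induce
        (↑(sa.disjSum sb) : Set (A ⊕ {b : B // b ≠ u}))).Connected := by
      rw [conn_mixed T X u z hAne hBne]
      refine ⟨by rw [hlp]; exact hz, by rw [hlp]; exact hsub.2, by rw [hrp]; exact hXconn⟩
    refine ⟨⟨⟨⟨Sum.inl z, by simp [hz]⟩, hconn⟩, ?_⟩, ?_, ?_⟩
    · rcases hleaf with ⟨b, hbm, hbleaf⟩ | ⟨a, ham, hanez, haleaf⟩
      · exact ⟨Sum.inr b, by simp [hbm], (graft_leaf_inr T X u z b).mpr hbleaf⟩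
      · exact ⟨Sum.inl a, by simp [ham], (graft_leaf_inl T X u z hanez).mpr haleaf⟩
    · exact ⟨Sum.inl z, by simp [hz], z, rfl⟩
    · obtain ⟨b, hbm⟩ := hsbne
      exact ⟨Sum.inr b, by simp [hbm], b, rfl⟩

private lemma disjSum_injective {α β : Type} :
    Function.Injective (fun p : Finset α × Finset β => p.1.disjSum p.2) := by
  rintro ⟨sa, sb⟩ ⟨ta, tb⟩ hEq
  have h := Finset.ext_iff.mp hEq
  have h1 : sa = ta := by
    ext a; simpa using h (Sum.inl a)
  have h2 : sb = tb := by
    ext b; simpa using h (Sum.inr b)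
  rw [h1, h2]

private lemma QM_lt [Fintype A] [Fintype B] (hX : X.IsTree) (hB : 2 ≤ Fintype.card B)
    {x y : A} (hx : ¬ IsLeaf T x)
    (h : numSubtreesContaining T y < numSubtreesContaining T x)
    (h' : numLeafSubtreesContaining T y ≤ numLeafSubtreesContaining T x) :
    (QM T X u y).ncard < (QM T X u x).ncard := by
  classical
  set W : A → Finset {b : B // b ≠ u} → Set (Finset A) := fun z sb =>
    {sa | (IsSubtree T sa ∧ z ∈ sa) ∧
      ((∃ b ∈ sb, IsLeaf X (↑b : B)) ∨ ∃ a ∈ sa, a ≠ z ∧ IsLeaf T a)} with hW_def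
  set GB : Finset (Finset {b : B // b ≠ u}) := Finset.univ.filter (fun sb =>
    sb.Nonempty ∧
      (X.induce (insert u (Subtype.val '' (↑sb : Set {b : B // b ≠ u})))).Connected)
    with hGB_def
  have key : ∀ z : A, (QM T X u z).ncard = ∑ sb ∈ GB, (W z sb).ncard := by
    intro z
    rw [Set.ncard_eq_toFinset_card _ (Set.toFinite _)]
    have hmem : ∀ p ∈ (Set.toFinite (QM T X u z)).toFinset, p.2 ∈ GB := by
      intro p hp
      rw [Set.Finite.mem_toFinset] at hp
      exact Finset.mem_filter.mpr ⟨Finset.mem_univ _, hp.2.1⟩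
    rw [Finset.card_eq_sum_card_fiberwise hmem]
    refine Finset.sum_congr rfl fun sb hsb => ?_
    have hGBsb := (Finset.mem_filter.mp hsb).2
    have himg : ((Set.toFinite (QM T X u z)).toFinset.filter fun p => p.2 = sb) =
        ((Set.toFinite (W z sb)).toFinset).image (fun sa => (sa, sb)) := by
      ext p
      rcases p with ⟨p1, p2⟩
      simp only [Finset.mem_filter, Finset.mem_image, Set.Finite.mem_toFinset]
      constructor
      · rintro ⟨hp, rfl⟩
        exact ⟨p1, ⟨hp.1, hp.2.2⟩, rfl⟩
      · rintro ⟨sa, hsa, hEq⟩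
        rw [Prod.ext_iff] at hEq
        obtain ⟨hEq1, hEq2⟩ := hEq
        dsimp at hEq1 hEq2
        subst hEq1
        subst hEq2
        exact ⟨⟨hsa.1, hGBsb, hsa.2⟩, rfl⟩
    rw [himg, Finset.card_image_of_injective _ (fun s t hst => (Prod.ext_iff.mp hst).1)]
    exact (Set.ncard_eq_toFinset_card _ (Set.toFinite _)).symm
  have hW_leaf : ∀ (z : A) (sb : Finset {b : B // b ≠ u}),
      (∃ b ∈ sb, IsLeaf X (↑b : B)) → (W z sb).ncard = numSubtreesContaining T z := by
    intro z sb hLf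
    have hset : W z sb = {s : Finset A | IsSubtree T s ∧ z ∈ s} := by
      ext sa
      constructor
      · rintro ⟨hc, -⟩; exact hc
      · intro hc; exact ⟨hc, Or.inl hLf⟩
    rw [hset]
    rfl
  have hW_noleaf : ∀ (z : A) (sb : Finset {b : B // b ≠ u}),
      ¬(∃ b ∈ sb, IsLeaf X (↑b : B)) →
        (W z sb).ncard = numLeafSubtreesContaining T z := by
    intro z sb hLf
    have hset : W z sb =
        {s : Finset A | IsSubtree T s ∧ z ∈ s ∧ ∃ w ∈ s, w ≠ z ∧ IsLeaf T w} := by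
      ext sa
      constructor
      · rintro ⟨⟨h1, h2⟩, hor⟩
        rcases hor with hl | ⟨a, ha1, ha2, ha3⟩
        · exact absurd hl hLf
        · exact ⟨h1, h2, a, ha1, ha2, ha3⟩
      · rintro ⟨h1, h2, a, ha1, ha2, ha3⟩
        exact ⟨⟨h1, h2⟩, Or.inr ⟨a, ha1, ha2, ha3⟩⟩
    rw [hset]
    rfl
  have hUGB : (Finset.univ : Finset {b : B // b ≠ u}) ∈ GB := by
    refine Finset.mem_filter.mpr ⟨Finset.mem_univ _, ?_, ?_⟩
    · obtain ⟨b, hbne⟩ := Fintype.exists_ne_of_one_lt_card (by omega) u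
      exact ⟨⟨b, hbne⟩, Finset.mem_univ _⟩
    · have hins : insert u (Subtype.val ''
          (↑(Finset.univ : Finset {b : B // b ≠ u}) : Set {b : B // b ≠ u})) =
          (Set.univ : Set B) := by
        ext c
        simp only [Set.mem_univ, iff_true]
        by_cases hcu : c = u
        · exact Set.mem_insert_iff.mpr (Or.inl hcu)
        · exact Set.mem_insert_iff.mpr (Or.inr ⟨⟨c, hcu⟩, by simp, rfl⟩)
      rw [hins]
      exact induce_univ_connected hX.isConnected
  have hterm : ∀ sb ∈ GB, (W y sb).ncard ≤ (W x sb).ncard := by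
    intro sb _
    by_cases hLf : ∃ b ∈ sb, IsLeaf X (↑b : B)
    · rw [hW_leaf y sb hLf, hW_leaf x sb hLf]
      exact le_of_lt h
    · rw [hW_noleaf y sb hLf, hW_noleaf x sb hLf]
      exact h'
  have hstrict : (W y Finset.univ).ncard < (W x Finset.univ).ncard := by
    obtain ⟨b, hbne, hbleaf⟩ := exists_leaf_ne hX hB u
    have hLf : ∃ b' ∈ (Finset.univ : Finset {b : B // b ≠ u}), IsLeaf X (↑b' : B) :=
      ⟨⟨b, hbne⟩, Finset.mem_univ _, hbleaf⟩
    rw [hW_leaf y _ hLf, hW_leaf x _ hLf]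
    exact h
  rw [key x, key y]
  exact Finset.sum_lt_sum hterm ⟨Finset.univ, hUGB, hstrict⟩

end GraftAux

/-- Attaching a rooted tree `X` (with at least two vertices) at a non-leaf
vertex `x` of `T` with `f_T(x) > f_T(y)` and `f*_T(x) ≥ f*_T(y)` produces more leaf
containing subtrees than attaching it at `y`. -/
theorem numLeafSubtrees_graft_lt {A B : Type} [Fintype A] [Fintype B]
    (T : SimpleGraph A) (X : SimpleGraph B) (hT : T.IsTree) (hX : X.IsTree)
    (x y : A) (hxy : x ≠ y) (u : B) (hB : 2 ≤ Fintype.card B)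
    (hx : ¬ IsLeaf T x)
    (h : numSubtreesContaining T y < numSubtreesContaining T x)
    (h' : numLeafSubtreesContaining T y ≤ numLeafSubtreesContaining T x) :
    numLeafSubtrees (graft T X y u) < numLeafSubtrees (graft T X x u) := by
  classical
  have hax : ∃ a', T.Adj x a' := exists_adj_of_conn hT.isConnected hxy
  have hay : ∃ a', T.Adj y a' := exists_adj_of_conn hT.isConnected hxy.symm
  have hbu : ∃ b', X.Adj u b' := by
    obtain ⟨b, hbne⟩ := Fintype.exists_ne_of_one_lt_card (by omega) u
    exact exists_adj_of_conn hX.isConnected (Ne.symm hbne)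
  rw [numLeafSubtrees_eq', numLeafSubtrees_eq', LS_card, LS_card]
  have h1 : (PLs u (graft T X y u)).ncard ≤ (PLs u (graft T X x u)).ncard := by
    rw [PL_eq T X u y hay hbu, PL_eq T X u x hax hbu,
      Set.ncard_image_of_injective _ (Finset.map_injective _),
      Set.ncard_image_of_injective _ (Finset.map_injective _)]
    refine Set.ncard_le_ncard ?_ (Set.toFinite _)
    rintro sa ⟨hs, a, haS, hne, hleaf⟩
    exact ⟨hs, a, haS, fun e => hx (e ▸ hleaf), hleaf⟩
  have h2 : (PRs u (graft T X y u)).ncard = (PRs u (graft T X x u)).ncard := by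
    rw [PR_eq T X u y, PR_eq T X u x]
  have h3 : (PMs u (graft T X y u)).ncard < (PMs u (graft T X x u)).ncard := by
    rw [PM_eq T X u y hay hbu, PM_eq T X u x hax hbu,
      Set.ncard_image_of_injective _ disjSum_injective,
      Set.ncard_image_of_injective _ disjSum_injective]
    exact QM_lt T X u hX hB hx h h'
  omega
end
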